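/- arXiv:1302.7144 — 15 statements merged into one kernel-verified Lean document; each statement's English description precedes it below -/
import Mathlib

section
/- Suppose the corner equation (E) holds for all k ∈ ℤ/Nℤ and the superposition formula (S1) holds for all k ∈ ℤ/Nℤ, and assume additionally that for all k one has μ·e^{x̃_k − x̂_k} ≠ λ and e^{x̂̃_k − x_{k+1}} ≠ λμ. Then the superposition formula (S2) and the corner equations (E1), (E2) and (E12) hold for all k ∈ ℤ/Nℤ. -/
/-!
Write `X, T, H, W` for the exponentials of `x, x̃, x̂, x̂̃` and `p_k = μ / H_k - λ / T_k`; all the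
equations become rational identities. (S1) at `k` says `W_k p_k = λμ X_{k+1} p_k + (μ - λ)`, and
(E) at `k` says `μ T_k - λ H_k = (μ - λ) X_k + λμ X_k² p_{k-1}`. Together they give
`μ T_k - λ H_k = X_k W_{k-1} p_{k-1}`, which is (S2) at `k - 1` once (E) is used again.
(E1) follows from this identity after eliminating `W_k` through (S1), which needs `p_k ≠ 0`;
(E2) is (E1) with the roles of `λ, x̃` and `μ, x̂` exchanged, and (E12) at `k` is
(S1) + (S2) at `k` minus (E) at `k + 1`.
-/

namespace Toda

variable {K : Type*} [Field K] {lam mu : K}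

theorem superposition_one_cleared (hlam : lam ≠ 0) (hmu : mu ≠ 0) {X' T H W : K}
    (hS : 1 / lam * (W / H - 1) - 1 / mu * (W / T - 1) + lam * (X' / T) - mu * (X' / H) = 0) :
    W * (mu / H - lam / T) = lam * mu * X' * (mu / H - lam / T) + (mu - lam) := by
  field_simp at hS
  linear_combination hS

theorem corner_cleared (hlam : lam ≠ 0) (hmu : mu ≠ 0) {X T H T₀ H₀ : K} (hX : X ≠ 0)
    (hE : 1 / lam * (T / X - 1) + lam * (X / T₀) = 1 / mu * (H / X - 1) + mu * (X / H₀)) :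
    mu * T - lam * H = (mu - lam) * X + lam * mu * X ^ 2 * (mu / H₀ - lam / T₀) := by
  field_simp at hE
  linear_combination hE

theorem corner_sub_eq_of_superposition_one (hlam : lam ≠ 0) (hmu : mu ≠ 0) {X T H T₀ H₀ W₀ : K}
    (hX : X ≠ 0)
    (hE : 1 / lam * (T / X - 1) + lam * (X / T₀) = 1 / mu * (H / X - 1) + mu * (X / H₀))
    (hS₀ : 1 / lam * (W₀ / H₀ - 1) - 1 / mu * (W₀ / T₀ - 1) + lam * (X / T₀) - mu * (X / H₀) = 0) :
    mu * T - lam * H = X * W₀ * (mu / H₀ - lam / T₀) := by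
  linear_combination corner_cleared hlam hmu hX hE - X * superposition_one_cleared hlam hmu hS₀

theorem superposition_two_of_corner (hlam : lam ≠ 0) (hmu : mu ≠ 0) {X' T' H' T H W : K}
    (hX' : X' ≠ 0) (hW : W ≠ 0)
    (hE : 1 / lam * (T' / X' - 1) + lam * (X' / T) = 1 / mu * (H' / X' - 1) + mu * (X' / H))
    (hS : 1 / lam * (W / H - 1) - 1 / mu * (W / T - 1) + lam * (X' / T) - mu * (X' / H) = 0) :
    1 / lam * (T' / X' - 1) - 1 / mu * (H' / X' - 1) + lam * (H' / W) - mu * (T' / W) = 0 := by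
  have hkey : X' * (mu / H - lam / T) = (mu * T' - lam * H') / W := by
    rw [eq_div_iff hW, corner_sub_eq_of_superposition_one hlam hmu hX' hE hS]; ring
  linear_combination hE + hkey

theorem corner_one_of_corner (hlam : lam ≠ 0) (hmu : mu ≠ 0) {X T H W X' T₀ H₀ W₀ : K}
    (hX : X ≠ 0) (hT : T ≠ 0) (hH : H ≠ 0) (hW₀ : W₀ ≠ 0) (hnd : mu * T ≠ lam * H)
    (hE : 1 / lam * (T / X - 1) + lam * (X / T₀) = 1 / mu * (H / X - 1) + mu * (X / H₀))
    (hS₀ : 1 / lam * (W₀ / H₀ - 1) - 1 / mu * (W₀ / T₀ - 1) + lam * (X / T₀) - mu * (X / H₀) = 0)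
    (hS : 1 / lam * (W / H - 1) - 1 / mu * (W / T - 1) + lam * (X' / T) - mu * (X' / H) = 0) :
    1 / lam * (T / X - 1) + lam * (X' / T) = 1 / mu * (W / T - 1) + mu * (T / W₀) := by
  have hreduced : W₀ * (mu * T - lam * H - (mu - lam) * X) = lam * mu * X * (mu * T - lam * H) := by
    rw [corner_sub_eq_of_superposition_one hlam hmu hX hE hS₀]
    linear_combination X * W₀ * superposition_one_cleared hlam hmu hS₀
  have hS_cleared :
      W * (mu * T - lam * H) = lam * mu * X' * (mu * T - lam * H) + (mu - lam) * H * T := by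
    have hw := superposition_one_cleared hlam hmu hS
    field_simp at hw
    linear_combination hw
  field_simp
  apply mul_left_cancel₀ (sub_ne_zero.2 hnd)
  linear_combination mu * T ^ 2 * hreduced - lam * X * W₀ * hS_cleared

end Toda

theorem toda_superposition_general
    (N : ℕ) (x xt xh xth : ZMod N → ℝ) (lam mu : ℝ)
    (hlam : lam ≠ 0) (hmu : mu ≠ 0)
    (hE : ∀ k : ZMod N,
      (1 / lam) * (Real.exp (xt k - x k) - 1) + lam * Real.exp (x k - xt (k - 1)) =
      (1 / mu) * (Real.exp (xh k - x k) - 1) + mu * Real.exp (x k - xh (k - 1)))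
    (hS1 : ∀ k : ZMod N,
      (1 / lam) * (Real.exp (xth k - xh k) - 1) - (1 / mu) * (Real.exp (xth k - xt k) - 1)
        + lam * Real.exp (x (k + 1) - xt k) - mu * Real.exp (x (k + 1) - xh k) = 0)
    (hnd1 : ∀ k : ZMod N, mu * Real.exp (xt k - xh k) ≠ lam) :
    (∀ k : ZMod N,
      (1 / lam) * (Real.exp (xt (k + 1) - x (k + 1)) - 1)
        - (1 / mu) * (Real.exp (xh (k + 1) - x (k + 1)) - 1)
        + lam * Real.exp (xh (k + 1) - xth k) - mu * Real.exp (xt (k + 1) - xth k) = 0) ∧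
    (∀ k : ZMod N,
      (1 / lam) * (Real.exp (xt k - x k) - 1) + lam * Real.exp (x (k + 1) - xt k) =
      (1 / mu) * (Real.exp (xth k - xt k) - 1) + mu * Real.exp (xt k - xth (k - 1))) ∧
    (∀ k : ZMod N,
      (1 / mu) * (Real.exp (xh k - x k) - 1) + mu * Real.exp (x (k + 1) - xh k) =
      (1 / lam) * (Real.exp (xth k - xh k) - 1) + lam * Real.exp (xh k - xth (k - 1))) ∧
    (∀ k : ZMod N,
      (1 / lam) * (Real.exp (xth k - xh k) - 1) + lam * Real.exp (xh (k + 1) - xth k) =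
      (1 / mu) * (Real.exp (xth k - xt k) - 1) + mu * Real.exp (xt (k + 1) - xth k)) := by
  have hexp := Real.exp_ne_zero
  have hnd : ∀ k, mu * Real.exp (xt k) ≠ lam * Real.exp (xh k) := fun k h =>
    hnd1 k (by rw [Real.exp_sub, ← mul_div_assoc, h, mul_div_cancel_right₀ _ (hexp _)])
  simp only [Real.exp_sub] at hE hS1 ⊢
  have hE_succ := fun k => hE (k + 1)
  have hS1_pred := fun k => hS1 (k - 1)
  simp only [add_sub_cancel_right] at hE_succ
  simp only [sub_add_cancel] at hS1_pred
  have hS2 := fun k =>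
    Toda.superposition_two_of_corner hlam hmu (hexp _) (hexp _) (hE_succ k) (hS1 k)
  refine ⟨hS2, fun k => ?_, fun k => ?_, fun k => ?_⟩
  · exact Toda.corner_one_of_corner hlam hmu (hexp _) (hexp _) (hexp _) (hexp _) (hnd k) (hE k)
      (hS1_pred k) (hS1 k)
  · exact Toda.corner_one_of_corner hmu hlam (hexp _) (hexp _) (hexp _) (hexp _) (hnd k).symm
      (hE k).symm (by linear_combination -hS1_pred k) (by linear_combination -hS1 k)
  · linear_combination hS1 k + hS2 k - hE_succ k

/-- For the Toda lattice with periodic boundary conditions, corner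
equation (E) together with superposition formula (S1) (plus nondegeneracy)
imply (S2), (E1), (E2) and (E12). -/
theorem toda_superposition
    (N : ℕ) [NeZero N] (x xt xh xth : ZMod N → ℝ) (lam mu : ℝ)
    (hlam : lam ≠ 0) (hmu : mu ≠ 0) (hlm : lam ≠ mu)
    (hE : ∀ k : ZMod N,
      (1 / lam) * (Real.exp (xt k - x k) - 1) + lam * Real.exp (x k - xt (k - 1)) =
      (1 / mu) * (Real.exp (xh k - x k) - 1) + mu * Real.exp (x k - xh (k - 1)))
    (hS1 : ∀ k : ZMod N,
      (1 / lam) * (Real.exp (xth k - xh k) - 1) - (1 / mu) * (Real.exp (xth k - xt k) - 1)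
        + lam * Real.exp (x (k + 1) - xt k) - mu * Real.exp (x (k + 1) - xh k) = 0)
    (hnd1 : ∀ k : ZMod N, mu * Real.exp (xt k - xh k) ≠ lam)
    (hnd2 : ∀ k : ZMod N, Real.exp (xth k - x (k + 1)) ≠ lam * mu) :
    (∀ k : ZMod N,
      (1 / lam) * (Real.exp (xt (k + 1) - x (k + 1)) - 1)
        - (1 / mu) * (Real.exp (xh (k + 1) - x (k + 1)) - 1)
        + lam * Real.exp (xh (k + 1) - xth k) - mu * Real.exp (xt (k + 1) - xth k) = 0) ∧
    (∀ k : ZMod N,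
      (1 / lam) * (Real.exp (xt k - x k) - 1) + lam * Real.exp (x (k + 1) - xt k) =
      (1 / mu) * (Real.exp (xth k - xt k) - 1) + mu * Real.exp (xt k - xth (k - 1))) ∧
    (∀ k : ZMod N,
      (1 / mu) * (Real.exp (xh k - x k) - 1) + mu * Real.exp (x (k + 1) - xh k) =
      (1 / lam) * (Real.exp (xth k - xh k) - 1) + lam * Real.exp (xh k - xth (k - 1))) ∧
    (∀ k : ZMod N,
      (1 / lam) * (Real.exp (xth k - xh k) - 1) + lam * Real.exp (xh (k + 1) - xth k) =
      (1 / mu) * (Real.exp (xth k - xt k) - 1) + mu * Real.exp (xt (k + 1) - xth k)) :=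
  toda_superposition_general N x xt xh xth lam mu hlam hmu hE hS1 hnd1
end

section
/- Suppose the corner equation (E) and the superposition formulas (S1), (S2) hold for all k ∈ ℤ/Nℤ, and assume that λ·e^{x̂_k} ≠ μ·e^{x̃_k} for all k. Define the Lagrangian Λ(u,v;ν) = (1/ν)·∑_{k∈ℤ/Nℤ}(e^{v_k−u_k} − 1 − (v_k−u_k)) − ν·∑_{k∈ℤ/Nℤ} e^{u_{k+1}−v_k} for fields u,v : ℤ/Nℤ → ℝ and a nonzero parameter ν. Then the discrete multi-time Lagrangian 1-form is closed: Λ(x,x̃;λ) + Λ(x̃,x̂̃;μ) − Λ(x,x̂;μ) − Λ(x̂,x̂̃;λ) = 0. -/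
/-!
Summed over `k`, (S2) minus (S1) cancels every exponential term of the closure defect (after a
shift `k ↦ k + 1`), leaving `(1/λ - 1/μ) ∑ₖ (x̂̃ₖ + xₖ₊₁ - x̃ₖ - x̂ₖ)`. Subtracting (E) at `k + 1`
from (S1) at `k` shows that `Pₖ = μ e^{x̃ₖ} - λ e^{x̂ₖ}` satisfies
`Pₖ₊₁ = Pₖ e^{x̂̃ₖ + xₖ₊₁ - x̃ₖ - x̂ₖ}`; the `Pₖ` are nonzero, so going once around `ℤ/Nℤ`
shows that the remaining sum vanishes.
-/

open Real Finset

/-- The discrete-time Lagrangian of the Bäcklund transformation for the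
periodic Toda lattice. -/
noncomputable def todaLagrangian (N : ℕ) [NeZero N] (u v : ZMod N → ℝ) (nu : ℝ) : ℝ :=
  (1 / nu) * ∑ k : ZMod N, (Real.exp (v k - u k) - 1 - (v k - u k))
    - nu * ∑ k : ZMod N, Real.exp (u (k + 1) - v k)

theorem sum_eq_zero_of_comp_perm_eq_mul_exp {ι : Type*} [Fintype ι] (σ : Equiv.Perm ι)
    {P d : ι → ℝ} (hP : ∀ k, P k ≠ 0) (h : ∀ k, P (σ k) = P k * exp (d k)) :
    ∑ k, d k = 0 := by
  have hprod : ∏ k, P (σ k) = ∏ k, P k := Equiv.prod_comp σ P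
  rw [prod_congr rfl fun k _ => h k, prod_mul_distrib, ← exp_sum] at hprod
  have hne : ∏ k, P k ≠ 0 := prod_ne_zero_iff.mpr fun k _ => hP k
  exact exp_eq_one_iff _ |>.mp <| (mul_eq_left₀ hne).mp hprod

theorem backlund_corner_factor {lam mu a b c y a' b' : ℝ} (hlam : lam ≠ 0) (hmu : mu ≠ 0)
    (hS : (1 / lam) * (exp (c - b) - 1) - (1 / mu) * (exp (c - a) - 1)
      + lam * exp (y - a) - mu * exp (y - b) = 0)
    (hE : (1 / lam) * (exp (a' - y) - 1) + lam * exp (y - a) =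
      (1 / mu) * (exp (b' - y) - 1) + mu * exp (y - b)) :
    mu * exp a' - lam * exp b' = (mu * exp a - lam * exp b) * exp (c + y - a - b) := by
  have h : (1 / lam) * exp (c - b) - (1 / mu) * exp (c - a) =
      (1 / lam) * exp (a' - y) - (1 / mu) * exp (b' - y) := by
    linear_combination hS - hE
  simp only [exp_sub, exp_add] at h ⊢
  field_simp at h ⊢
  linear_combination -h

theorem sum_comp_add_right {G M : Type*} [AddGroup G] [Fintype G] [AddCommMonoid M]
    (f : G → M) (a : G) : ∑ k, f (k + a) = ∑ k, f k :=
  Equiv.sum_comp (Equiv.addRight a) f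

theorem toda_closure_general
    (N : ℕ) [NeZero N] (x xt xh xth : ZMod N → ℝ) (lam mu : ℝ)
    (hlam : lam ≠ 0) (hmu : mu ≠ 0)
    (hE : ∀ k : ZMod N,
      (1 / lam) * (Real.exp (xt k - x k) - 1) + lam * Real.exp (x k - xt (k - 1)) =
      (1 / mu) * (Real.exp (xh k - x k) - 1) + mu * Real.exp (x k - xh (k - 1)))
    (hS1 : ∀ k : ZMod N,
      (1 / lam) * (Real.exp (xth k - xh k) - 1) - (1 / mu) * (Real.exp (xth k - xt k) - 1)
        + lam * Real.exp (x (k + 1) - xt k) - mu * Real.exp (x (k + 1) - xh k) = 0)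
    (hS2 : ∀ k : ZMod N,
      (1 / lam) * (Real.exp (xt (k + 1) - x (k + 1)) - 1)
        - (1 / mu) * (Real.exp (xh (k + 1) - x (k + 1)) - 1)
        + lam * Real.exp (xh (k + 1) - xth k) - mu * Real.exp (xt (k + 1) - xth k) = 0)
    (hnd : ∀ k : ZMod N, lam * Real.exp (xh k) ≠ mu * Real.exp (xt k)) :
    todaLagrangian N x xt lam + todaLagrangian N xt xth mu
      - todaLagrangian N x xh mu - todaLagrangian N xh xth lam = 0 := by
  have hflux : ∑ k, (xth k + x (k + 1) - xt k - xh k) = 0 :=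
    sum_eq_zero_of_comp_perm_eq_mul_exp (Equiv.addRight 1)
      (fun k => sub_ne_zero_of_ne (hnd k).symm)
      (fun k => backlund_corner_factor hlam hmu (hS1 k) (by simpa using hE (k + 1)))
  have hS1sum := sum_eq_zero fun k (_ : k ∈ univ) => hS1 k
  have hS2sum := sum_eq_zero fun k (_ : k ∈ univ) => hS2 k
  unfold todaLagrangian
  simp only [sum_add_distrib, sum_sub_distrib, ← mul_sum] at hflux hS1sum hS2sum ⊢
  simp only [sum_comp_add_right (fun k => x k), sum_comp_add_right (fun k => exp (xt k - x k)),
    sum_comp_add_right (fun k => exp (xh k - x k))] at hflux hS2sum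
  linear_combination hS2sum - hS1sum + (1 / lam - 1 / mu) * hflux

/-- Closure of the discrete multi-time Lagrangian 1-form for the
Toda lattice. -/
theorem toda_closure
    (N : ℕ) [NeZero N] (x xt xh xth : ZMod N → ℝ) (lam mu : ℝ)
    (hlam : lam ≠ 0) (hmu : mu ≠ 0) (hlm : lam ≠ mu)
    (hE : ∀ k : ZMod N,
      (1 / lam) * (Real.exp (xt k - x k) - 1) + lam * Real.exp (x k - xt (k - 1)) =
      (1 / mu) * (Real.exp (xh k - x k) - 1) + mu * Real.exp (x k - xh (k - 1)))
    (hS1 : ∀ k : ZMod N,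
      (1 / lam) * (Real.exp (xth k - xh k) - 1) - (1 / mu) * (Real.exp (xth k - xt k) - 1)
        + lam * Real.exp (x (k + 1) - xt k) - mu * Real.exp (x (k + 1) - xh k) = 0)
    (hS2 : ∀ k : ZMod N,
      (1 / lam) * (Real.exp (xt (k + 1) - x (k + 1)) - 1)
        - (1 / mu) * (Real.exp (xh (k + 1) - x (k + 1)) - 1)
        + lam * Real.exp (xh (k + 1) - xth k) - mu * Real.exp (xt (k + 1) - xth k) = 0)
    (hnd : ∀ k : ZMod N, lam * Real.exp (xh k) ≠ mu * Real.exp (xt k)) :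
    todaLagrangian N x xt lam + todaLagrangian N xt xth mu
      - todaLagrangian N x xh mu - todaLagrangian N xh xth lam = 0 :=
  toda_closure_general N x xt xh xth lam mu hlam hmu hE hS1 hS2 hnd
end

section
/- Suppose the corner equation (E) and the superposition formulas (S1), (S2) hold for all k ∈ ℤ/Nℤ, and assume that λ·e^{x̂_k} ≠ μ·e^{x̃_k} for all k. Then for every k ∈ ℤ/Nℤ the multiplicative superposition formula holds: e^{x̂̃_k − x̃_k − x̂_k + x_{k+1}} = (λe^{x̂_{k+1}} − μe^{x̃_{k+1}})/(λe^{x̂_k} − μe^{x̃_k}). -/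
/-!
Clearing denominators, (S1) and (S2) at the site `k` share the factor
`c = e^{x̂̃_k} - λμ e^{x_{k+1}}`:
`(λ e^{x̂_k} - μ e^{x̃_k}) c = (λ - μ) e^{x̃_k} e^{x̂_k}` and
`(λ e^{x̂_{k+1}} - μ e^{x̃_{k+1}}) c = (λ - μ) e^{x_{k+1}} e^{x̂̃_k}`.
Since `λ ≠ μ` the first identity forces `c ≠ 0`, and dividing the second by the first gives the
multiplicative formula.
-/

open Real

theorem div_eq_div_of_mul_eq_mul_of_mul_eq_mul {K : Type*} [Field K] {a b c r s t : K}
    (ha : a * c = r * s) (hb : b * c = r * t) (hr : r ≠ 0) (hs : s ≠ 0) :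
    b / a = t / s := by
  have hc : c ≠ 0 := right_ne_zero_of_mul (ha ▸ mul_ne_zero hr hs)
  rw [← mul_div_mul_right b a hc, ha, hb, mul_div_mul_left _ _ hr]

namespace Toda

variable {lam mu : ℝ}

theorem factor_of_superposition_one (hlam : lam ≠ 0) (hmu : mu ≠ 0) {u v w z : ℝ}
    (h : (1 / lam) * (exp (z - v) - 1) - (1 / mu) * (exp (z - u) - 1)
      + lam * exp (w - u) - mu * exp (w - v) = 0) :
    (lam * exp v - mu * exp u) * (exp z - lam * mu * exp w) = (lam - mu) * (exp u * exp v) := by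
  simp only [exp_sub] at h
  field_simp at h
  linear_combination -h

theorem factor_of_superposition_two (hlam : lam ≠ 0) (hmu : mu ≠ 0) {p q w z : ℝ}
    (h : (1 / lam) * (exp (p - w) - 1) - (1 / mu) * (exp (q - w) - 1)
      + lam * exp (q - z) - mu * exp (p - z) = 0) :
    (lam * exp q - mu * exp p) * (exp z - lam * mu * exp w) = (lam - mu) * (exp w * exp z) := by
  simp only [exp_sub] at h
  field_simp at h
  linear_combination -h

end Toda

theorem toda_multiplicative_superposition_general
    (N : ℕ) (x xt xh xth : ZMod N → ℝ) (lam mu : ℝ)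
    (hlam : lam ≠ 0) (hmu : mu ≠ 0) (hlm : lam ≠ mu)
    (hS1 : ∀ k : ZMod N,
      (1 / lam) * (Real.exp (xth k - xh k) - 1) - (1 / mu) * (Real.exp (xth k - xt k) - 1)
        + lam * Real.exp (x (k + 1) - xt k) - mu * Real.exp (x (k + 1) - xh k) = 0)
    (hS2 : ∀ k : ZMod N,
      (1 / lam) * (Real.exp (xt (k + 1) - x (k + 1)) - 1)
        - (1 / mu) * (Real.exp (xh (k + 1) - x (k + 1)) - 1)
        + lam * Real.exp (xh (k + 1) - xth k) - mu * Real.exp (xt (k + 1) - xth k) = 0) :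
    ∀ k : ZMod N,
      Real.exp (xth k - xt k - xh k + x (k + 1)) =
        (lam * Real.exp (xh (k + 1)) - mu * Real.exp (xt (k + 1)))
          / (lam * Real.exp (xh k) - mu * Real.exp (xt k)) := by
  intro k
  have hexp : exp (xth k - xt k - xh k + x (k + 1))
      = exp (x (k + 1)) * exp (xth k) / (exp (xt k) * exp (xh k)) := by
    rw [exp_add, exp_sub, exp_sub]
    ring
  rw [hexp]
  exact (div_eq_div_of_mul_eq_mul_of_mul_eq_mul
    (Toda.factor_of_superposition_one hlam hmu (hS1 k))
    (Toda.factor_of_superposition_two hlam hmu (hS2 k))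
    (sub_ne_zero.mpr hlm) (by positivity)).symm

/-- The multiplicative superposition formula for the Toda lattice
follows from the corner equation (E) and the superposition formulas
(S1), (S2). -/
theorem toda_multiplicative_superposition
    (N : ℕ) [NeZero N] (x xt xh xth : ZMod N → ℝ) (lam mu : ℝ)
    (hlam : lam ≠ 0) (hmu : mu ≠ 0) (hlm : lam ≠ mu)
    (hE : ∀ k : ZMod N,
      (1 / lam) * (Real.exp (xt k - x k) - 1) + lam * Real.exp (x k - xt (k - 1)) =
      (1 / mu) * (Real.exp (xh k - x k) - 1) + mu * Real.exp (x k - xh (k - 1)))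
    (hS1 : ∀ k : ZMod N,
      (1 / lam) * (Real.exp (xth k - xh k) - 1) - (1 / mu) * (Real.exp (xth k - xt k) - 1)
        + lam * Real.exp (x (k + 1) - xt k) - mu * Real.exp (x (k + 1) - xh k) = 0)
    (hS2 : ∀ k : ZMod N,
      (1 / lam) * (Real.exp (xt (k + 1) - x (k + 1)) - 1)
        - (1 / mu) * (Real.exp (xh (k + 1) - x (k + 1)) - 1)
        + lam * Real.exp (xh (k + 1) - xth k) - mu * Real.exp (xt (k + 1) - xth k) = 0)
    (hnd : ∀ k : ZMod N, lam * Real.exp (xh k) ≠ mu * Real.exp (xt k)) :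
    ∀ k : ZMod N,
      Real.exp (xth k - xt k - xh k + x (k + 1)) =
        (lam * Real.exp (xh (k + 1)) - mu * Real.exp (xt (k + 1)))
          / (lam * Real.exp (xh k) - mu * Real.exp (xt k)) :=
  toda_multiplicative_superposition_general N x xt xh xth lam mu hlam hmu hlm hS1 hS2
end

section
/- Let λ ≠ 0, let x, x̃ : ℤ/Nℤ → ℝ, and define p : ℤ/Nℤ → ℝ by p_k = (1/λ)(e^{x̃_k−x_k}−1) + λe^{x_k−x̃_{k−1}}. Then the monodromy matrix T = L_{N−1}·L_{N−2}·⋯·L_1·L_0 satisfies T · (e^{x̃_{−1}}, 1)ᵀ = (∏_{k∈ℤ/Nℤ} e^{x̃_k−x_k}) · (e^{x̃_{−1}}, 1)ᵀ; in particular, ∏_{k∈ℤ/Nℤ} e^{x̃_k−x_k} is an eigenvalue of T. -/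
/-! The vectors `v_k = (e^{x̃_{k-1}}, 1)ᵀ` form a gauge: the choice of `p` is exactly what makes
`L_k v_k = e^{x̃_{k-1} - x_k} v_{k+1}`. Transporting `v_0` once around the lattice therefore returns
`v_N = v_0` scaled by `∏_k e^{x̃_{k-1} - x_k}`, which equals `∏_k e^{x̃_k - x_k}` after shifting the
index of the periodic field `x̃`. -/

/-- Transition matrix of the zero curvature representation of the Bäcklund
transformation for the Toda lattice. -/
noncomputable def todaL (N : ℕ) (lam : ℝ) (x p : ZMod N → ℝ) (i : ℕ) :
    Matrix (Fin 2) (Fin 2) ℝ :=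
  !![1 + lam * p (i : ZMod N), -lam ^ 2 * Real.exp (x (i : ZMod N));
     Real.exp (-(x (i : ZMod N))), 0]

/-- Monodromy matrix `T = L_{N-1} ⬝ ⋯ ⬝ L_1 ⬝ L_0`. -/
noncomputable def todaT (N : ℕ) (lam : ℝ) (x p : ZMod N → ℝ) :
    Matrix (Fin 2) (Fin 2) ℝ :=
  ((List.range N).reverse.map (todaL N lam x p)).prod

open Finset Matrix

theorem ZMod.prod_range_natCast {M : Type*} [CommMonoid M] (N : ℕ) [NeZero N] (f : ZMod N → M) :
    ∏ k ∈ range N, f k = ∏ k : ZMod N, f k :=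
  prod_nbij' (fun i : ℕ => (i : ZMod N)) ZMod.val (by simp) (fun j _ => mem_range.2 j.val_lt)
    (fun _ hi => ZMod.val_natCast_of_lt (mem_range.1 hi)) (fun j _ => ZMod.natCast_zmod_val j)
    (fun _ _ => rfl)

theorem Matrix.hasEigenvalue_toLin'_of_mulVec_eq_smul {R n : Type*} [CommRing R] [Fintype n]
    [DecidableEq n] {A : Matrix n n R} {μ : R} {v : n → R} (hv : v ≠ 0) (h : A *ᵥ v = μ • v) :
    Module.End.HasEigenvalue (Matrix.toLin' A) μ :=
  Module.End.hasEigenvalue_of_hasEigenvector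
    ⟨Module.End.mem_eigenspace_iff.2 (by rwa [Matrix.toLin'_apply]), hv⟩

theorem Matrix.list_prod_range_mulVec {R n : Type*} [CommRing R] [Fintype n] [DecidableEq n]
    (L : ℕ → Matrix n n R) (v : ℕ → n → R) (c : ℕ → R) (h : ∀ m, L m *ᵥ v m = c m • v (m + 1))
    (m : ℕ) : ((List.range m).reverse.map L).prod *ᵥ v 0 = (∏ k ∈ range m, c k) • v m := by
  induction m with
  | zero => simp
  | succ m ih =>
    rw [List.range_succ, List.reverse_append, List.reverse_singleton, List.singleton_append,
      List.map_cons, List.prod_cons, ← Matrix.mulVec_mulVec, ih, Matrix.mulVec_smul, h, smul_smul,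
      prod_range_succ, mul_comm]

theorem todaL_mulVec (N : ℕ) {lam : ℝ} (hlam : lam ≠ 0) (x xt p : ZMod N → ℝ) (m : ℕ)
    (hp : p m = (1 / lam) * (Real.exp (xt m - x m) - 1) + lam * Real.exp (x m - xt (m - 1))) :
    todaL N lam x p m *ᵥ ![Real.exp (xt (m - 1)), 1] =
      Real.exp (xt (m - 1) - x m) • ![Real.exp (xt m), 1] := by
  have hrow : (1 + lam * p m) * Real.exp (xt (m - 1)) + -lam ^ 2 * Real.exp (x m) * 1 =
      Real.exp (xt (m - 1) - x m) * Real.exp (xt m) := by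
    rw [hp, Real.exp_sub, Real.exp_sub, Real.exp_sub]
    field_simp
    ring
  ext i
  fin_cases i
  · simpa [todaL, mulVec, dotProduct] using hrow
  · simp [todaL, Real.exp_sub, Real.exp_neg, div_eq_mul_inv]

theorem prod_exp_sub_shift {G : Type*} [AddCommGroup G] [Fintype G] (f g : G → ℝ) (a : G) :
    ∏ k, Real.exp (f (k - a) - g k) = ∏ k, Real.exp (f k - g k) := by
  simp only [Real.exp_sub, prod_div_distrib]
  rw [Fintype.prod_equiv (Equiv.subRight a) (fun k => Real.exp (f (k - a))) (fun k => Real.exp (f k))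
    fun _ => rfl]

/-- For the periodic Toda lattice, `∏ e^{x̃_k − x_k}` is an
eigenvalue of the monodromy matrix, with eigenvector `(e^{x̃_{−1}}, 1)ᵀ`. -/
theorem toda_monodromy_eigenvalue
    (N : ℕ) [NeZero N] (lam : ℝ) (hlam : lam ≠ 0) (x xt p : ZMod N → ℝ)
    (hp : ∀ k : ZMod N,
      p k = (1 / lam) * (Real.exp (xt k - x k) - 1) + lam * Real.exp (x k - xt (k - 1))) :
    (todaT N lam x p).mulVec ![Real.exp (xt (-1)), 1] =
      (∏ k : ZMod N, Real.exp (xt k - x k)) • ![Real.exp (xt (-1)), 1] ∧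
    Module.End.HasEigenvalue (Matrix.toLin' (todaT N lam x p))
      (∏ k : ZMod N, Real.exp (xt k - x k)) := by
  have hcast : ∀ m : ℕ, ((m + 1 : ℕ) : ZMod N) - 1 = m := fun m => by push_cast; ring
  have htransport := list_prod_range_mulVec (todaL N lam x p)
    (fun m => ![Real.exp (xt ((m : ZMod N) - 1)), 1])
    (fun m => Real.exp (xt ((m : ZMod N) - 1) - x m))
    (fun m => by rw [hcast]; exact todaL_mulVec N hlam x xt p m (hp m)) N
  have hT : todaT N lam x p *ᵥ ![Real.exp (xt (-1)), 1] =
      (∏ k : ZMod N, Real.exp (xt k - x k)) • ![Real.exp (xt (-1)), 1] := by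
    simpa only [todaT, Nat.cast_zero, zero_sub, ZMod.natCast_self, prod_exp_sub_shift,
      ZMod.prod_range_natCast N fun k => Real.exp (xt (k - 1) - x k)] using htransport
  exact ⟨hT, hasEigenvalue_toLin'_of_mulVec_eq_smul (by simp) hT⟩
end

section
/- Let N ≥ 1, λ ≠ 0, and let x, x̃ : {1,…,N} → ℝ. Define p : {1,…,N} → ℝ by the open-end Bäcklund equations p_1 = (1/λ)(e^{x̃_1−x_1}−1) and p_k = (1/λ)(e^{x̃_k−x_k}−1) + λe^{x_k−x̃_{k−1}} for 2 ≤ k ≤ N. Then the (1,1)-entry of the monodromy matrix T = L_N·L_{N−1}·⋯·L_1 equals ∏_{k=1}^{N} e^{x̃_k−x_k}. -/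
/-- Transition matrix of the zero curvature representation of the Bäcklund
transformation for the Toda lattice (open-end case, indices 1,…,N). -/
noncomputable def todaOpenL (lam : ℝ) (x p : ℕ → ℝ) (k : ℕ) :
    Matrix (Fin 2) (Fin 2) ℝ :=
  !![1 + lam * p k, -lam ^ 2 * Real.exp (x k);
     Real.exp (-(x k)), 0]

/-- Monodromy matrix `T = L_N ⬝ L_{N−1} ⬝ ⋯ ⬝ L_1` (open-end case). -/
noncomputable def todaOpenT (N : ℕ) (lam : ℝ) (x p : ℕ → ℝ) :
    Matrix (Fin 2) (Fin 2) ℝ :=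
  ((List.range N).reverse.map (fun i => todaOpenL lam x p (i + 1))).prod

/-! The first column of `T_n` is `(P_n, P_n e^{-x̃_n})` with `P_n = ∏_{k ≤ n} e^{x̃_k - x_k}`:
multiplying by `L_{n+1}`, the Bäcklund equation for `p_{n+1}` is exactly what turns the top
entry into `P_n e^{x̃_{n+1} - x_{n+1}}`, while the bottom entry becomes `e^{-x_{n+1}} P_n`. -/

section Monodromy

variable (lam : ℝ) (x p : ℕ → ℝ)

lemma todaOpenT_succ (n : ℕ) :
    todaOpenT (n + 1) lam x p = todaOpenL lam x p (n + 1) * todaOpenT n lam x p := by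
  simp [todaOpenT, List.range_succ]

lemma todaOpenT_one : todaOpenT 1 lam x p = todaOpenL lam x p 1 := by
  simp [todaOpenT]

lemma todaOpenT_succ_zero_zero (n : ℕ) :
    todaOpenT (n + 1) lam x p 0 0 = (1 + lam * p (n + 1)) * todaOpenT n lam x p 0 0
      - lam ^ 2 * Real.exp (x (n + 1)) * todaOpenT n lam x p 1 0 := by
  rw [todaOpenT_succ, Matrix.mul_apply, Fin.sum_univ_two]
  simp only [todaOpenL, neg_mul, Fin.isValue, Matrix.of_apply, Matrix.cons_val', Matrix.cons_val_zero,
    Matrix.cons_val_fin_one, Matrix.cons_val_one]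
  ring

lemma todaOpenT_succ_one_zero (n : ℕ) :
    todaOpenT (n + 1) lam x p 1 0 = Real.exp (-x (n + 1)) * todaOpenT n lam x p 0 0 := by
  rw [todaOpenT_succ, Matrix.mul_apply, Fin.sum_univ_two]
  simp [todaOpenL]

end Monodromy

lemma todaOpenT_col_zero_of_backlund (N : ℕ) (lam : ℝ) (hlam : lam ≠ 0) (x xt p : ℕ → ℝ)
    (hp1 : p 1 = (1 / lam) * (Real.exp (xt 1 - x 1) - 1))
    (hpk : ∀ k, 2 ≤ k → k ≤ N →
      p k = (1 / lam) * (Real.exp (xt k - x k) - 1) + lam * Real.exp (x k - xt (k - 1)))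
    (n : ℕ) (hn : 1 ≤ n) (hnN : n ≤ N) :
    todaOpenT n lam x p 0 0 = ∏ k ∈ Finset.Icc 1 n, Real.exp (xt k - x k) ∧
      todaOpenT n lam x p 1 0 =
        (∏ k ∈ Finset.Icc 1 n, Real.exp (xt k - x k)) * Real.exp (-xt n) := by
  induction n, hn using Nat.le_induction with
  | base =>
    rw [todaOpenT_one, Finset.Icc_self, Finset.prod_singleton, mul_comm, ← Real.exp_add]
    simp only [todaOpenL, Matrix.of_apply, Matrix.cons_val', Matrix.cons_val_zero,
      Matrix.cons_val_one, Matrix.empty_val', Matrix.cons_val_fin_one, hp1]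
    refine ⟨by field_simp; ring, by ring_nf⟩
  | succ m hm ih =>
    obtain ⟨h00, h10⟩ := ih (by omega)
    have hbacklund : 1 + lam * p (m + 1) - lam ^ 2 * Real.exp (x (m + 1) - xt m) =
        Real.exp (xt (m + 1) - x (m + 1)) := by
      rw [hpk (m + 1) (by omega) hnN, Nat.add_sub_cancel]
      field_simp
      ring
    rw [Finset.prod_Icc_succ_top (by omega), todaOpenT_succ_zero_zero, todaOpenT_succ_one_zero,
      h00, h10]
    constructor
    · rw [← hbacklund, sub_eq_add_neg (x _), Real.exp_add]
      ring
    · rw [mul_assoc, ← Real.exp_add]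
      ring_nf

/-- For the open-end Toda lattice, the (1,1) entry of the
monodromy matrix equals `∏_{k=1}^N e^{x̃_k − x_k}`. -/
theorem toda_open_monodromy
    (N : ℕ) (hN : 1 ≤ N) (lam : ℝ) (hlam : lam ≠ 0) (x xt p : ℕ → ℝ)
    (hp1 : p 1 = (1 / lam) * (Real.exp (xt 1 - x 1) - 1))
    (hpk : ∀ k, 2 ≤ k → k ≤ N →
      p k = (1 / lam) * (Real.exp (xt k - x k) - 1) + lam * Real.exp (x k - xt (k - 1))) :
    todaOpenT N lam x p 0 0 = ∏ k ∈ Finset.Icc 1 N, Real.exp (xt k - x k) :=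
  (todaOpenT_col_zero_of_backlund N lam hlam x xt p hp1 hpk N hN le_rfl).1
end

section
/- Suppose the corner equation (E) and the superposition formulas (S1), (S2) hold for all k ∈ ℤ/Nℤ, and assume the nondegeneracy conditions: for all k, the quantities x̃_k−x_k, x̂_k−x_k, x̂̃_k−x̃_k, x̂̃_k−x̂_k, λ+x_{k+1}−x̃_k, μ+x_{k+1}−x̂_k, λ+x_{k+1}−x̂̃_k, μ+x_{k+1}−x̂̃_k, λ−μ+x̂_k−x̃_k, μ+x̃_{k+1}−x̂̃_k and λ+x̂_{k+1}−x̂̃_k are all nonzero. Then the corner equations (E1), (E2) and (E12) hold for all k ∈ ℤ/Nℤ. -/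
/-- For the dual Toda lattice with periodic boundary conditions,
corner equation (E) and superposition formulas (S1), (S2) (plus nondegeneracy)
imply the corner equations (E1), (E2), (E12). -/
theorem dualToda_superposition
    (N : ℕ) [NeZero N] (x xt xh xth : ZMod N → ℝ) (lam mu : ℝ) (hlm : lam ≠ mu)
    (hE : ∀ k : ZMod N,
      (xt k - x k) * (lam + x k - xt (k - 1)) = (xh k - x k) * (mu + x k - xh (k - 1)))
    (hS1 : ∀ k : ZMod N,
      (xth k - xh k) * (lam + x (k + 1) - xt k) = (xth k - xt k) * (mu + x (k + 1) - xh k))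
    (hS2 : ∀ k : ZMod N,
      (xt (k + 1) - x (k + 1)) * (lam + xh (k + 1) - xth k) =
      (xh (k + 1) - x (k + 1)) * (mu + xt (k + 1) - xth k))
    (hnd : ∀ k : ZMod N,
      xt k - x k ≠ 0 ∧ xh k - x k ≠ 0 ∧ xth k - xt k ≠ 0 ∧ xth k - xh k ≠ 0 ∧
      lam + x (k + 1) - xt k ≠ 0 ∧ mu + x (k + 1) - xh k ≠ 0 ∧
      lam + x (k + 1) - xth k ≠ 0 ∧ mu + x (k + 1) - xth k ≠ 0 ∧
      lam - mu + xh k - xt k ≠ 0 ∧ mu + xt (k + 1) - xth k ≠ 0 ∧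
      lam + xh (k + 1) - xth k ≠ 0) :
    (∀ k : ZMod N,
      (xt k - x k) * (lam + x (k + 1) - xt k) = (xth k - xt k) * (mu + xt k - xth (k - 1))) ∧
    (∀ k : ZMod N,
      (xh k - x k) * (mu + x (k + 1) - xh k) = (xth k - xh k) * (lam + xh k - xth (k - 1))) ∧
    (∀ k : ZMod N,
      (xth k - xh k) * (lam + xh (k + 1) - xth k) =
      (xth k - xt k) * (mu + xt (k + 1) - xth k)) := by
  -- nondegeneracy at k
  have hbc : ∀ k : ZMod N, xt k - xh k ≠ 0 := by
    intro k h
    obtain ⟨h1, h2, h3, h4, h5, h6, h7, h8, h9, h10, h11⟩ := hnd k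
    have hz : (xth k - xt k) * (lam - mu + xh k - xt k) = 0 := by
      linear_combination hS1 k - (lam + x (k + 1) - xt k) * h
    rcases mul_eq_zero.mp hz with h' | h'
    · exact h3 h'
    · exact h9 h'
  refine ⟨fun k => ?_, fun k => ?_, fun k => ?_⟩
  · -- (E1)
    have hS2' := hS2 (k - 1)
    rw [sub_add_cancel] at hS2'
    exact mul_left_cancel₀ (hbc k) (by
      linear_combination (xt k - x k) * hS1 k - (xth k - xt k) * hS2')
  · -- (E2)
    have hS2' := hS2 (k - 1)
    rw [sub_add_cancel] at hS2'
    exact mul_left_cancel₀ (hbc k) (by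
      linear_combination (xh k - x k) * hS1 k - (xth k - xh k) * hS2')
  · -- (E12)
    obtain ⟨h1, h2, h3, h4, h5, h6, h7, h8, h9, h10, h11⟩ := hnd k
    have hCA : xh (k + 1) - x (k + 1) ≠ 0 := (hnd (k + 1)).2.1
    have hE' := hE (k + 1)
    rw [add_sub_cancel_right] at hE'
    exact mul_left_cancel₀ (mul_ne_zero hCA h5) (by
      linear_combination (xh (k + 1) - x (k + 1)) * (lam + xh (k + 1) - xth k) * hS1 k
        - (xth k - xt k) * (lam + xh (k + 1) - xth k) * hE'
        + (lam + x (k + 1) - xt k) * (xth k - xt k) * hS2 k)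
end

section
/- Suppose the corner equation (E) and the superposition formulas (S1), (S2) hold for all k ∈ ℤ/Nℤ, and assume that for all k: μ−λ+x̃_k−x̂_k ≠ 0, λ+x_{k+1}−x̂̃_k ≠ 0 and λ+x_{k+1}−x̃_k ≠ 0. Then ∏_{k∈ℤ/Nℤ}(λ+x̂_{k+1}−x̂̃_k) = ∏_{k∈ℤ/Nℤ}(λ+x_{k+1}−x̃_k). -/
/-- Spectrality (closure) product identity for the dual Toda
lattice with periodic boundary conditions. -/
theorem dualToda_spectrality
    (N : ℕ) [NeZero N] (x xt xh xth : ZMod N → ℝ) (lam mu : ℝ) (hlm : lam ≠ mu)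
    (hE : ∀ k : ZMod N,
      (xt k - x k) * (lam + x k - xt (k - 1)) = (xh k - x k) * (mu + x k - xh (k - 1)))
    (hS1 : ∀ k : ZMod N,
      (xth k - xh k) * (lam + x (k + 1) - xt k) = (xth k - xt k) * (mu + x (k + 1) - xh k))
    (hS2 : ∀ k : ZMod N,
      (xt (k + 1) - x (k + 1)) * (lam + xh (k + 1) - xth k) =
      (xh (k + 1) - x (k + 1)) * (mu + xt (k + 1) - xth k))
    (hnd : ∀ k : ZMod N,
      mu - lam + xt k - xh k ≠ 0 ∧ lam + x (k + 1) - xth k ≠ 0 ∧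
      lam + x (k + 1) - xt k ≠ 0) :
    ∏ k : ZMod N, (lam + xh (k + 1) - xth k) = ∏ k : ZMod N, (lam + x (k + 1) - xt k) := by
  set a : ZMod N → ℝ := fun k => lam + xh (k + 1) - xth k with ha
  set b : ZMod N → ℝ := fun k => lam + x (k + 1) - xt k with hb
  set g : ZMod N → ℝ := fun k => mu - lam + xt k - xh k with hg
  have key : ∀ k : ZMod N, a k * g k = b k * g (k + 1) := by
    intro k
    have hc : lam + x (k + 1) - xth k ≠ 0 := (hnd k).2.1
    apply mul_left_cancel₀ hc
    have h1 := hS1 k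
    have h2 := hS2 k
    simp only [ha, hb, hg]
    linear_combination (lam + xh (k + 1) - xth k) * h1 - (lam + x (k + 1) - xt k) * h2
  have hgprod : ∏ k : ZMod N, g k ≠ 0 :=
    Finset.prod_ne_zero_iff.mpr (fun k _ => (hnd k).1)
  have hshift : ∏ k : ZMod N, g (k + 1) = ∏ k : ZMod N, g k :=
    Fintype.prod_equiv (Equiv.addRight (1 : ZMod N)) _ _ (fun k => rfl)
  have hmul : (∏ k : ZMod N, a k) * ∏ k : ZMod N, g k
      = (∏ k : ZMod N, b k) * ∏ k : ZMod N, g k := by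
    calc (∏ k : ZMod N, a k) * ∏ k : ZMod N, g k
        = ∏ k : ZMod N, (a k * g k) := (Finset.prod_mul_distrib).symm
      _ = ∏ k : ZMod N, (b k * g (k + 1)) := Finset.prod_congr rfl (fun k _ => key k)
      _ = (∏ k : ZMod N, b k) * ∏ k : ZMod N, g (k + 1) := Finset.prod_mul_distrib
      _ = (∏ k : ZMod N, b k) * ∏ k : ZMod N, g k := by rw [hshift]
  exact mul_right_cancel₀ hgprod hmul
end

section
/- Suppose λ > 0, μ > 0, λ ≠ μ, the corner equation (E) and the superposition formula (S1) hold for all k ∈ ℤ/Nℤ, and assume the nondegeneracy conditions: for all k, e^{x̃_k−x_k} ≠ 1, e^{x̂_k−x_k} ≠ 1, e^{x̂̃_k−x̃_k} ≠ 1, e^{x̂̃_k−x̂_k} ≠ 1 and λ ≠ μ·e^{x̂_k−x̃_k}. Then the superposition formula (S2) and the corner equations (E1), (E2) and (E12) hold for all k ∈ ℤ/Nℤ. -/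
/-!
Write `a, b, c, d` for `e^{x_k}, e^{x̃_k}, e^{x̂_k}, e^{x̂̃_k}`, `A, B, C` for
`e^{x_{k+1}}, e^{x̃_{k+1}}, e^{x̂_{k+1}}` and `D` for `e^{x̂̃_{k-1}}`. Clearing denominators turns
every corner equation and superposition formula into a polynomial identity in these variables.
(S2) and (E12) at `k` are then combinations of (E) at `k + 1` and (S1) at `k`, and (E1) at `k` is a
combination of (S2) at `k - 1` and (S1) at `k`, up to the factors `λb - μc`, `λb + A` and `λ - μ`
respectively, which the nondegeneracy condition, `λ, A, b > 0` and `λ ≠ μ` allow us to cancel.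
-/

namespace ModToda

variable {K : Type*} [Field K] {lam mu a b c d A B C D : K}

theorem s2_of_e_of_s1 (hA : A ≠ 0) (hb : b ≠ 0) (hc : c ≠ 0) (hd : d ≠ 0)
    (hE : (B / A - 1) * (lam + A / b) = (C / A - 1) * (mu + A / c))
    (hS1 : (d / c - 1) * (lam + A / b) = (d / b - 1) * (mu + A / c))
    (hnd : lam ≠ mu * (c / b)) :
    (B / A - 1) * (lam + C / d) = (C / A - 1) * (mu + B / d) := by
  rw [← mul_div_assoc, ne_eq, eq_div_iff hb] at hnd
  field_simp at hE hS1 ⊢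
  refine mul_left_cancel₀ (sub_ne_zero.mpr hnd) ?_
  linear_combination (lam - mu) * hE + (lam * B - mu * C - (lam - mu) * A) * hS1

theorem e12_of_e_of_s1 (hA : A ≠ 0) (hb : b ≠ 0) (hc : c ≠ 0) (hd : d ≠ 0)
    (hE : (B / A - 1) * (lam + A / b) = (C / A - 1) * (mu + A / c))
    (hS1 : (d / c - 1) * (lam + A / b) = (d / b - 1) * (mu + A / c))
    (hlamA : lam * b + A ≠ 0) :
    (d / c - 1) * (lam + C / d) = (d / b - 1) * (mu + B / d) := by
  field_simp at hE hS1 ⊢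
  refine mul_left_cancel₀ hlamA ?_
  linear_combination (b - d) * hE + (C * b + lam * b * d - (b - d) * A) * hS1

theorem e1_of_s2_of_s1 (ha : a ≠ 0) (hb : b ≠ 0) (hc : c ≠ 0) (hD : D ≠ 0)
    (hS2 : (b / a - 1) * (lam + c / D) = (c / a - 1) * (mu + b / D))
    (hS1 : (d / c - 1) * (lam + A / b) = (d / b - 1) * (mu + A / c))
    (hlm : lam ≠ mu) :
    (b / a - 1) * (lam + A / b) = (d / b - 1) * (mu + b / D) := by
  field_simp at hS2 hS1 ⊢
  refine mul_left_cancel₀ (sub_ne_zero.mpr hlm.symm) ?_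
  linear_combination (a + mu * D) * hS1 - (A + mu * d + (lam - mu) * b) * hS2

end ModToda

open ModToda in
theorem modToda_superposition_general
    (N : ℕ) (x xt xh xth : ZMod N → ℝ) (lam mu : ℝ)
    (hlam : 0 < lam) (hlm : lam ≠ mu)
    (hE : ∀ k : ZMod N,
      (Real.exp (xt k - x k) - 1) * (lam + Real.exp (x k - xt (k - 1))) =
      (Real.exp (xh k - x k) - 1) * (mu + Real.exp (x k - xh (k - 1))))
    (hS1 : ∀ k : ZMod N,
      (Real.exp (xth k - xh k) - 1) * (lam + Real.exp (x (k + 1) - xt k)) =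
      (Real.exp (xth k - xt k) - 1) * (mu + Real.exp (x (k + 1) - xh k)))
    (hnd : ∀ k : ZMod N,
      Real.exp (xt k - x k) ≠ 1 ∧ Real.exp (xh k - x k) ≠ 1 ∧
      Real.exp (xth k - xt k) ≠ 1 ∧ Real.exp (xth k - xh k) ≠ 1 ∧
      lam ≠ mu * Real.exp (xh k - xt k)) :
    (∀ k : ZMod N,
      (Real.exp (xt (k + 1) - x (k + 1)) - 1) * (lam + Real.exp (xh (k + 1) - xth k)) =
      (Real.exp (xh (k + 1) - x (k + 1)) - 1) * (mu + Real.exp (xt (k + 1) - xth k))) ∧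
    (∀ k : ZMod N,
      (Real.exp (xt k - x k) - 1) * (lam + Real.exp (x (k + 1) - xt k)) =
      (Real.exp (xth k - xt k) - 1) * (mu + Real.exp (xt k - xth (k - 1)))) ∧
    (∀ k : ZMod N,
      (Real.exp (xh k - x k) - 1) * (mu + Real.exp (x (k + 1) - xh k)) =
      (Real.exp (xth k - xh k) - 1) * (lam + Real.exp (xh k - xth (k - 1)))) ∧
    (∀ k : ZMod N,
      (Real.exp (xth k - xh k) - 1) * (lam + Real.exp (xh (k + 1) - xth k)) =
      (Real.exp (xth k - xt k) - 1) * (mu + Real.exp (xt (k + 1) - xth k))) := by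
  have h0 (t : ℝ) : Real.exp t ≠ 0 := Real.exp_ne_zero t
  simp only [Real.exp_sub] at hE hS1 hnd ⊢
  have hE_succ (k : ZMod N) := by simpa only [add_sub_cancel_right] using hE (k + 1)
  have hS2 (k : ZMod N) :=
    s2_of_e_of_s1 (h0 _) (h0 _) (h0 _) (h0 _) (hE_succ k) (hS1 k) (hnd k).2.2.2.2
  have hS2_pred (k : ZMod N) := by simpa only [sub_add_cancel] using hS2 (k - 1)
  refine ⟨hS2, fun k => ?_, fun k => ?_, fun k => ?_⟩
  · exact e1_of_s2_of_s1 (h0 _) (h0 _) (h0 _) (h0 _) (hS2_pred k) (hS1 k) hlm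
  -- (E2) is (E1) with the roles of `(λ, x̃)` and `(μ, x̂)` exchanged.
  · exact e1_of_s2_of_s1 (h0 _) (h0 _) (h0 _) (h0 _) (hS2_pred k).symm (hS1 k).symm hlm.symm
  · exact e12_of_e_of_s1 (h0 _) (h0 _) (h0 _) (h0 _) (hE_succ k) (hS1 k) (by positivity)

/-- For the modified Toda lattice with periodic boundary
conditions, corner equation (E) and superposition formula (S1) (plus
nondegeneracy) imply (S2), (E1), (E2), (E12). -/
theorem modToda_superposition
    (N : ℕ) [NeZero N] (x xt xh xth : ZMod N → ℝ) (lam mu : ℝ)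
    (hlam : 0 < lam) (hmu : 0 < mu) (hlm : lam ≠ mu)
    (hE : ∀ k : ZMod N,
      (Real.exp (xt k - x k) - 1) * (lam + Real.exp (x k - xt (k - 1))) =
      (Real.exp (xh k - x k) - 1) * (mu + Real.exp (x k - xh (k - 1))))
    (hS1 : ∀ k : ZMod N,
      (Real.exp (xth k - xh k) - 1) * (lam + Real.exp (x (k + 1) - xt k)) =
      (Real.exp (xth k - xt k) - 1) * (mu + Real.exp (x (k + 1) - xh k)))
    (hnd : ∀ k : ZMod N,
      Real.exp (xt k - x k) ≠ 1 ∧ Real.exp (xh k - x k) ≠ 1 ∧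
      Real.exp (xth k - xt k) ≠ 1 ∧ Real.exp (xth k - xh k) ≠ 1 ∧
      lam ≠ mu * Real.exp (xh k - xt k)) :
    (∀ k : ZMod N,
      (Real.exp (xt (k + 1) - x (k + 1)) - 1) * (lam + Real.exp (xh (k + 1) - xth k)) =
      (Real.exp (xh (k + 1) - x (k + 1)) - 1) * (mu + Real.exp (xt (k + 1) - xth k))) ∧
    (∀ k : ZMod N,
      (Real.exp (xt k - x k) - 1) * (lam + Real.exp (x (k + 1) - xt k)) =
      (Real.exp (xth k - xt k) - 1) * (mu + Real.exp (xt k - xth (k - 1)))) ∧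
    (∀ k : ZMod N,
      (Real.exp (xh k - x k) - 1) * (mu + Real.exp (x (k + 1) - xh k)) =
      (Real.exp (xth k - xh k) - 1) * (lam + Real.exp (xh k - xth (k - 1)))) ∧
    (∀ k : ZMod N,
      (Real.exp (xth k - xh k) - 1) * (lam + Real.exp (xh (k + 1) - xth k)) =
      (Real.exp (xth k - xt k) - 1) * (mu + Real.exp (xt (k + 1) - xth k))) :=
  modToda_superposition_general N x xt xh xth lam mu hlam hlm hE hS1 hnd
end

section
/- Suppose λ > 0, μ > 0, λ ≠ μ, the corner equation (E) and the superposition formulas (S1), (S2) hold for all k ∈ ℤ/Nℤ, and assume that λ·e^{x̃_k−x̂_k} ≠ μ for all k. Then ∏_{k∈ℤ/Nℤ}(1+λe^{x̂̃_k−x̂_{k+1}}) = ∏_{k∈ℤ/Nℤ}(1+λe^{x̃_k−x_{k+1}}). -/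
/-!
With `u k = λ e^{x̃_k - x̂_k} - μ`, the corner equation at `k + 1` and the superposition formula
(S1) at `k` give the local identity
`(1 + λ e^{x̂̃_k - x̂_{k+1}}) u_k = (1 + λ e^{x̃_k - x_{k+1}}) u_{k+1}`.
Multiplying over `ℤ/Nℤ`, the product of the `u_k` equals that of its shift, so it cancels,
being nonzero by hypothesis.
-/

theorem Fintype.prod_eq_prod_of_mul_eq_mul_shift {G M : Type*} [AddGroup G] [Fintype G]
    [CommGroupWithZero M] {f g u : G → M} (a : G) (hu : ∀ k, u k ≠ 0)
    (h : ∀ k, f k * u k = g k * u (k + a)) : ∏ k, f k = ∏ k, g k := by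
  refine mul_right_cancel₀ (b := ∏ k, u k) (Finset.prod_ne_zero_iff.mpr fun k _ => hu k) ?_
  calc (∏ k, f k) * ∏ k, u k = ∏ k, g k * u (k + a) := by
        rw [← Finset.prod_mul_distrib]; exact Fintype.prod_congr _ _ h
    _ = (∏ k, g k) * ∏ k, u k := by
        rw [Finset.prod_mul_distrib,
          Fintype.prod_equiv (Equiv.addRight a) (fun k => u (k + a)) u fun _ => rfl]

/-- The variables stand for `a = x_{k+1}`, `t = x̃_k`, `h = x̂_k`, `w = x̂̃_k`, `t₁ = x̃_{k+1}`,
`h₁ = x̂_{k+1}`; `hS1` is (S1) at `k` and `hE` is (E) at `k + 1`. -/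
theorem modToda_plaquette (l m a t h w t₁ h₁ : ℝ)
    (hS1 : (Real.exp (w - h) - 1) * (l + Real.exp (a - t)) =
      (Real.exp (w - t) - 1) * (m + Real.exp (a - h)))
    (hE : (Real.exp (t₁ - a) - 1) * (l + Real.exp (a - t)) =
      (Real.exp (h₁ - a) - 1) * (m + Real.exp (a - h))) :
    (1 + l * Real.exp (w - h₁)) * (l * Real.exp (t - h) - m) =
      (1 + l * Real.exp (t - a)) * (l * Real.exp (t₁ - h₁) - m) := by
  simp only [Real.exp_sub] at hS1 hE ⊢
  field_simp at hS1 hE ⊢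
  linear_combination l * Real.exp a * hS1 - l * hE

theorem modToda_spectrality_general
    (N : ℕ) [NeZero N] (x xt xh xth : ZMod N → ℝ) (lam mu : ℝ)
    (hE : ∀ k : ZMod N,
      (Real.exp (xt k - x k) - 1) * (lam + Real.exp (x k - xt (k - 1))) =
      (Real.exp (xh k - x k) - 1) * (mu + Real.exp (x k - xh (k - 1))))
    (hS1 : ∀ k : ZMod N,
      (Real.exp (xth k - xh k) - 1) * (lam + Real.exp (x (k + 1) - xt k)) =
      (Real.exp (xth k - xt k) - 1) * (mu + Real.exp (x (k + 1) - xh k)))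
    (hnd : ∀ k : ZMod N, lam * Real.exp (xt k - xh k) ≠ mu) :
    ∏ k : ZMod N, (1 + lam * Real.exp (xth k - xh (k + 1))) =
    ∏ k : ZMod N, (1 + lam * Real.exp (xt k - x (k + 1))) := by
  refine Fintype.prod_eq_prod_of_mul_eq_mul_shift 1
    (u := fun k => lam * Real.exp (xt k - xh k) - mu) (fun k => sub_ne_zero.mpr (hnd k)) ?_
  intro k
  have hEk := hE (k + 1)
  rw [add_sub_cancel_right] at hEk
  exact modToda_plaquette _ _ _ _ _ _ _ _ (hS1 k) hEk

/-- Spectrality (closure) product identity for the modified Toda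
lattice with periodic boundary conditions. -/
theorem modToda_spectrality
    (N : ℕ) [NeZero N] (x xt xh xth : ZMod N → ℝ) (lam mu : ℝ)
    (hlam : 0 < lam) (hmu : 0 < mu) (hlm : lam ≠ mu)
    (hE : ∀ k : ZMod N,
      (Real.exp (xt k - x k) - 1) * (lam + Real.exp (x k - xt (k - 1))) =
      (Real.exp (xh k - x k) - 1) * (mu + Real.exp (x k - xh (k - 1))))
    (hS1 : ∀ k : ZMod N,
      (Real.exp (xth k - xh k) - 1) * (lam + Real.exp (x (k + 1) - xt k)) =
      (Real.exp (xth k - xt k) - 1) * (mu + Real.exp (x (k + 1) - xh k)))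
    (hS2 : ∀ k : ZMod N,
      (Real.exp (xt (k + 1) - x (k + 1)) - 1) * (lam + Real.exp (xh (k + 1) - xth k)) =
      (Real.exp (xh (k + 1) - x (k + 1)) - 1) * (mu + Real.exp (xt (k + 1) - xth k)))
    (hnd : ∀ k : ZMod N, lam * Real.exp (xt k - xh k) ≠ mu) :
    ∏ k : ZMod N, (1 + lam * Real.exp (xth k - xh (k + 1))) =
    ∏ k : ZMod N, (1 + lam * Real.exp (xt k - x (k + 1))) :=
  modToda_spectrality_general N x xt xh xth lam mu hE hS1 hnd
end

section
/- Let λ ∈ ℝ, let x, x̃ : ℤ/Nℤ → ℝ, and define q : ℤ/Nℤ → ℝ by q_k = (e^{x̃_k−x_k}−1)(λ+e^{x_k−x̃_{k−1}}). Then the monodromy matrix T = L_{N−1}·L_{N−2}·⋯·L_1·L_0 satisfies T · (e^{x̃_{−1}}, 1)ᵀ = (∏_{k∈ℤ/Nℤ}(1+λe^{x̃_{k−1}−x_k})) · (e^{x̃_{−1}}, 1)ᵀ; in particular, ∏_{k∈ℤ/Nℤ}(1+λe^{x̃_{k−1}−x_k}) is an eigenvalue of T. -/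
/-- Transition matrix of the zero curvature representation of the Bäcklund
transformation for the modified Toda lattice (with `q_k = e^{p_k}`). -/
noncomputable def modTodaL (N : ℕ) (lam : ℝ) (x q : ZMod N → ℝ) (i : ℕ) :
    Matrix (Fin 2) (Fin 2) ℝ :=
  !![lam + q (i : ZMod N), Real.exp (x (i : ZMod N));
     lam * Real.exp (-(x (i : ZMod N))), 1]

/-- Monodromy matrix `T = L_{N-1} ⬝ ⋯ ⬝ L_1 ⬝ L_0` for the modified Toda
lattice. -/
noncomputable def modTodaT (N : ℕ) (lam : ℝ) (x q : ZMod N → ℝ) :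
    Matrix (Fin 2) (Fin 2) ℝ :=
  ((List.range N).reverse.map (modTodaL N lam x q)).prod

/-!
The vectors `v_k = (e^{x̃_{k-1}}, 1)ᵀ` are carried by the transition matrices from one site to the
next: the constraint on `q` is exactly what makes `L_k v_k = (1 + λ e^{x̃_{k-1} - x_k}) v_{k+1}`.
Chaining these relations around the period, `v_N = v_0` by periodicity, so `v_0` is an eigenvector
of the monodromy matrix with the product of the factors as eigenvalue.
-/

open Finset Matrix

theorem Matrix.list_prod_mulVec_of_mulVec_eq_smul {ι R : Type*} [Fintype ι] [DecidableEq ι]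
    [CommSemiring R] (M : ℕ → Matrix ι ι R) (v : ℕ → ι → R) (c : ℕ → R)
    (h : ∀ i, M i *ᵥ v i = c i • v (i + 1)) (n : ℕ) :
    ((List.range n).reverse.map M).prod *ᵥ v 0 = (∏ i ∈ range n, c i) • v n := by
  induction n with
  | zero => simp
  | succ n ih =>
    rw [List.range_succ, List.reverse_append, List.reverse_singleton, List.singleton_append,
      List.map_cons, List.prod_cons, ← mulVec_mulVec, ih, mulVec_smul, h, prod_range_succ,
      smul_smul, mul_comm]

theorem ZMod.prod_eq_prod_range {M : Type*} [CommMonoid M] (N : ℕ) [NeZero N] (g : ZMod N → M) :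
    ∏ k, g k = ∏ i ∈ range N, g i :=
  prod_nbij' ZMod.val Nat.cast (fun k _ => mem_range.2 k.val_lt) (fun _ _ => mem_univ _)
    (fun k _ => ZMod.natCast_zmod_val k) (fun _ hi => ZMod.val_natCast_of_lt (mem_range.1 hi))
    (fun k _ => by rw [ZMod.natCast_zmod_val])

theorem modTodaL_mulVec (N : ℕ) (lam : ℝ) (x xt q : ZMod N → ℝ)
    (hq : ∀ k : ZMod N,
      q k = (Real.exp (xt k - x k) - 1) * (lam + Real.exp (x k - xt (k - 1)))) (n : ℕ) :
    modTodaL N lam x q n *ᵥ ![Real.exp (xt ((n : ZMod N) - 1)), 1] =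
      (1 + lam * Real.exp (xt ((n : ZMod N) - 1) - x n)) • ![Real.exp (xt n), 1] := by
  ext i
  fin_cases i <;>
    simp only [modTodaL, mulVec, dotProduct, Fin.sum_univ_two, Fin.zero_eta, Fin.mk_one, of_apply,
      cons_val', cons_val_zero, cons_val_one, cons_val_fin_one, Pi.smul_apply, smul_eq_mul, hq,
      Real.exp_sub, Real.exp_neg] <;>
    field_simp <;> ring

/-- For the periodic modified Toda lattice,
`∏ (1 + λ e^{x̃_{k−1} − x_k})` is an eigenvalue of the monodromy matrix, with
eigenvector `(e^{x̃_{−1}}, 1)ᵀ`. -/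
theorem modToda_monodromy_eigenvalue
    (N : ℕ) [NeZero N] (lam : ℝ) (x xt q : ZMod N → ℝ)
    (hq : ∀ k : ZMod N,
      q k = (Real.exp (xt k - x k) - 1) * (lam + Real.exp (x k - xt (k - 1)))) :
    (modTodaT N lam x q).mulVec ![Real.exp (xt (-1)), 1] =
      (∏ k : ZMod N, (1 + lam * Real.exp (xt (k - 1) - x k))) • ![Real.exp (xt (-1)), 1] ∧
    Module.End.HasEigenvalue (Matrix.toLin' (modTodaT N lam x q))
      (∏ k : ZMod N, (1 + lam * Real.exp (xt (k - 1) - x k))) := by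
  have hT : modTodaT N lam x q *ᵥ ![Real.exp (xt (-1)), 1] =
      (∏ k : ZMod N, (1 + lam * Real.exp (xt (k - 1) - x k))) • ![Real.exp (xt (-1)), 1] := by
    have hchain := list_prod_mulVec_of_mulVec_eq_smul _
      (fun i => ![Real.exp (xt ((i : ZMod N) - 1)), 1]) _
      (fun i => by simpa using modTodaL_mulVec N lam x xt q hq i) N
    rw [modTodaT, ZMod.prod_eq_prod_range N]
    simpa only [Nat.cast_zero, zero_sub, ZMod.natCast_self] using hchain
  have hv : (![Real.exp (xt (-1)), 1] : Fin 2 → ℝ) ≠ 0 := fun h => by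
    simpa using congrFun h 1
  refine ⟨hT, Module.End.hasEigenvalue_of_hasEigenvector ⟨?_, hv⟩⟩
  rwa [Module.End.mem_eigenspace_iff, toLin'_apply]
end

section
/- Suppose λ ≠ 0, μ ≠ 0, λ ≠ μ, the corner equation (E) and the superposition formulas (S1), (S2) hold for all k ∈ ℤ/Nℤ, and assume the nondegeneracy conditions: for all k, the differences x̃_k−x_k, x̂_k−x_k, x_k−x̃_{k−1}, x_k−x̂_{k−1}, x_{k+1}−x̃_k, x_{k+1}−x̂_k, x̂̃_k−x̃_k, x̂̃_k−x̂_k, x̃_k−x̂̃_{k−1}, x̂_k−x̂̃_{k−1}, x_{k+1}−x̂̃_k and x̂_k−x̃_k are all nonzero. Then the corner equations (E1), (E2) and (E12) hold for all k ∈ ℤ/Nℤ. -/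
private lemma ratKey (lam mu A B C : ℝ) (hA : A ≠ 0) (hB : B ≠ 0) (hC : C ≠ 0)
    (h : mu * A * (B + C) = lam * (A + C) * B) :
    lam / A - mu / B = (mu - lam) / C := by
  rw [div_sub_div _ _ hA hB, div_eq_div_iff (mul_ne_zero hA hB) hC]
  linear_combination -h

private lemma negdiv (p q : ℝ) : p / q = (-p) / (-q) := by
  rw [neg_div_neg_eq]

/-- For the symmetric rational additive Toda-type system with
periodic boundary conditions, corner equation (E) and superposition formulas
(S1), (S2) (plus nondegeneracy) imply (E1), (E2), (E12). -/
theorem ratAddToda_superposition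
    (N : ℕ) [NeZero N] (x xt xh xth : ZMod N → ℝ) (lam mu : ℝ)
    (hlam : lam ≠ 0) (hmu : mu ≠ 0) (hlm : lam ≠ mu)
    (hE : ∀ k : ZMod N,
      lam / (xt k - x k) + lam / (x k - xt (k - 1)) =
      mu / (xh k - x k) + mu / (x k - xh (k - 1)))
    (hS1 : ∀ k : ZMod N,
      mu * (xth k - xh k) * (x (k + 1) - xt k) = lam * (xth k - xt k) * (x (k + 1) - xh k))
    (hS2 : ∀ k : ZMod N,
      mu * (xt (k + 1) - x (k + 1)) * (xh (k + 1) - xth k) =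
      lam * (xh (k + 1) - x (k + 1)) * (xt (k + 1) - xth k))
    (hnd : ∀ k : ZMod N,
      xt k - x k ≠ 0 ∧ xh k - x k ≠ 0 ∧ x k - xt (k - 1) ≠ 0 ∧ x k - xh (k - 1) ≠ 0 ∧
      x (k + 1) - xt k ≠ 0 ∧ x (k + 1) - xh k ≠ 0 ∧
      xth k - xt k ≠ 0 ∧ xth k - xh k ≠ 0 ∧
      xt k - xth (k - 1) ≠ 0 ∧ xh k - xth (k - 1) ≠ 0 ∧
      x (k + 1) - xth k ≠ 0 ∧ xh k - xt k ≠ 0) :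
    (∀ k : ZMod N,
      lam / (xt k - x k) + lam / (x (k + 1) - xt k) =
      mu / (xth k - xt k) + mu / (xt k - xth (k - 1))) ∧
    (∀ k : ZMod N,
      mu / (xh k - x k) + mu / (x (k + 1) - xh k) =
      lam / (xth k - xh k) + lam / (xh k - xth (k - 1))) ∧
    (∀ k : ZMod N,
      lam / (xth k - xh k) + lam / (xh (k + 1) - xth k) =
      mu / (xth k - xt k) + mu / (xt (k + 1) - xth k)) := by
  refine ⟨fun k => ?_, fun k => ?_, fun k => ?_⟩
  · -- (E1) from S2 at k-1 and S1 at k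
    obtain ⟨h1, h2, h3, h4, h5, h6, h7, h8, h9, h10, h11, h12⟩ := hnd k
    have hS2' := hS2 (k - 1)
    rw [sub_add_cancel] at hS2'
    -- abbreviations: a = x k, b = xt k, c = xh k, d = x (k+1), z = xth (k-1), w = xth k
    have hcb : xh k - xt k ≠ 0 := h12
    have hbc : xt k - xh k ≠ 0 := fun h => hcb (by linarith [sub_eq_zero.mp h, sub_eq_zero.mpr (sub_eq_zero.mp h).symm] )
    have I1 : lam / (xt k - x k) - mu / (xt k - xth (k - 1)) =
        (mu - lam) / (xh k - xt k) := by
      refine ratKey lam mu _ _ _ h1 h9 hcb ?_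
      linear_combination hS2'
    have I2 : mu / (xth k - xt k) - lam / (x (k + 1) - xt k) =
        (lam - mu) / (xt k - xh k) := by
      refine ratKey mu lam _ _ _ h7 h5 hbc ?_
      linear_combination - hS1 k
    have hneg : (lam - mu) / (xt k - xh k) = (mu - lam) / (xh k - xt k) := by
      rw [negdiv]; ring_nf
    rw [hneg] at I2
    linarith
  · -- (E2) from S2 at k-1 and S1 at k
    obtain ⟨h1, h2, h3, h4, h5, h6, h7, h8, h9, h10, h11, h12⟩ := hnd k
    have hS2' := hS2 (k - 1)
    rw [sub_add_cancel] at hS2'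
    have hcb : xh k - xt k ≠ 0 := h12
    have hbc : xt k - xh k ≠ 0 := fun h => hcb (by linarith [sub_eq_zero.mp h])
    have I5 : mu / (xh k - x k) - lam / (xh k - xth (k - 1)) =
        (lam - mu) / (xt k - xh k) := by
      refine ratKey mu lam _ _ _ h2 h10 hbc ?_
      linear_combination - hS2'
    have I6 : mu / (x (k + 1) - xh k) - lam / (xth k - xh k) =
        (lam - mu) / (xh k - xt k) := by
      refine ratKey mu lam _ _ _ h6 h8 hcb ?_
      linear_combination - hS1 k
    have hneg : (lam - mu) / (xt k - xh k) = (mu - lam) / (xh k - xt k) := by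
      rw [negdiv]; ring_nf
    rw [hneg] at I5
    have hsum : (lam - mu) / (xh k - xt k) = -((mu - lam) / (xh k - xt k)) := by ring
    rw [hsum] at I6
    linarith
  · -- (E12) from S1 at k and S2 at k
    obtain ⟨h1, h2, h3, h4, h5, h6, h7, h8, h9, h10, h11, h12⟩ := hnd k
    obtain ⟨g1, g2, g3, g4, g5, g6, g7, g8, g9, g10, g11, g12⟩ := hnd (k + 1)
    rw [add_sub_cancel_right] at g9 g10
    have hdw : x (k + 1) - xth k ≠ 0 := h11
    have hwd : xth k - x (k + 1) ≠ 0 := fun h => hdw (by linarith [sub_eq_zero.mp h])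
    have I3 : lam / (xth k - xh k) - mu / (xth k - xt k) =
        (mu - lam) / (x (k + 1) - xth k) := by
      refine ratKey lam mu _ _ _ h8 h7 hdw ?_
      linear_combination hS1 k
    have I4 : lam / (xh (k + 1) - xth k) - mu / (xt (k + 1) - xth k) =
        (mu - lam) / (xth k - x (k + 1)) := by
      refine ratKey lam mu _ _ _ g10 g9 hwd ?_
      linear_combination hS2 k
    have hneg : (mu - lam) / (xth k - x (k + 1)) =
        (lam - mu) / (x (k + 1) - xth k) := by
      rw [negdiv]; ring_nf
    rw [hneg] at I4
    have hsum : (lam - mu) / (x (k + 1) - xth k) = -((mu - lam) / (x (k + 1) - xth k)) := by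
      ring
    rw [hsum] at I4
    linarith
end

section
/- Suppose λ ≠ 0, μ ≠ 0, λ ≠ μ, the corner equation (E) and the superposition formulas (S1), (S2) hold for all k ∈ ℤ/Nℤ, and assume that for all k the quantities x̃_k−x_k, x̂_k−x̃_k, x̂̃_k−x̂_k, x_{k+1}−x̂̃_k and x_{k+1}−x̃_k are nonzero. Then ∏_{k∈ℤ/Nℤ}(x_{k+1}−x̃_k) · ∏_{k∈ℤ/Nℤ}(x̂̃_k−x̂_k) = ∏_{k∈ℤ/Nℤ}(x̂_{k+1}−x̂̃_k) · ∏_{k∈ℤ/Nℤ}(x̃_k−x_k). -/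
/-- Spectrality (closure) product identity for the symmetric
rational additive Toda-type system with periodic boundary conditions. -/
theorem ratAddToda_spectrality
    (N : ℕ) [NeZero N] (x xt xh xth : ZMod N → ℝ) (lam mu : ℝ)
    (hlam : lam ≠ 0) (hmu : mu ≠ 0) (hlm : lam ≠ mu)
    (hE : ∀ k : ZMod N,
      lam / (xt k - x k) + lam / (x k - xt (k - 1)) =
      mu / (xh k - x k) + mu / (x k - xh (k - 1)))
    (hS1 : ∀ k : ZMod N,
      mu * (xth k - xh k) * (x (k + 1) - xt k) = lam * (xth k - xt k) * (x (k + 1) - xh k))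
    (hS2 : ∀ k : ZMod N,
      mu * (xt (k + 1) - x (k + 1)) * (xh (k + 1) - xth k) =
      lam * (xh (k + 1) - x (k + 1)) * (xt (k + 1) - xth k))
    (hnd : ∀ k : ZMod N,
      xt k - x k ≠ 0 ∧ xh k - xt k ≠ 0 ∧ xth k - xh k ≠ 0 ∧
      x (k + 1) - xth k ≠ 0 ∧ x (k + 1) - xt k ≠ 0) :
    (∏ k : ZMod N, (x (k + 1) - xt k)) * (∏ k : ZMod N, (xth k - xh k)) =
    (∏ k : ZMod N, (xh (k + 1) - xth k)) * (∏ k : ZMod N, (xt k - x k)) := by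
  classical
  have hd : ∀ k : ZMod N, xt k - x k ≠ 0 := fun k => (hnd k).1
  have he : ∀ k : ZMod N, xh k - xt k ≠ 0 := fun k => (hnd k).2.1
  have hb : ∀ k : ZMod N, xth k - xh k ≠ 0 := fun k => (hnd k).2.2.1
  have hxth : ∀ k : ZMod N, x (k + 1) - xth k ≠ 0 := fun k => (hnd k).2.2.2.1
  have ha : ∀ k : ZMod N, x (k + 1) - xt k ≠ 0 := fun k => (hnd k).2.2.2.2
  -- p * D = mu * a * e   (pure algebra from S1)
  have hpD : ∀ k : ZMod N,
      (xth k - xt k) * (mu * (x (k + 1) - xt k) - lam * (x (k + 1) - xh k)) =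
      mu * (x (k + 1) - xt k) * (xh k - xt k) := fun k => by linear_combination hS1 k
  -- b * D = lam * q * e
  have hbD : ∀ k : ZMod N,
      (xth k - xh k) * (mu * (x (k + 1) - xt k) - lam * (x (k + 1) - xh k)) =
      lam * (x (k + 1) - xh k) * (xh k - xt k) := fun k => by linear_combination hS1 k
  -- D ≠ 0
  have hD : ∀ k : ZMod N, mu * (x (k + 1) - xt k) - lam * (x (k + 1) - xh k) ≠ 0 := by
    intro k h
    have h2 := hpD k
    rw [h, mul_zero] at h2
    exact mul_ne_zero (mul_ne_zero hmu (ha k)) (he k) h2.symm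
  -- q ≠ 0
  have hq : ∀ k : ZMod N, x (k + 1) - xh k ≠ 0 := by
    intro k h
    have h2 := hbD k
    rw [h, mul_zero, sub_zero, zero_mul] at h2
    exact mul_ne_zero (hb k) (mul_ne_zero hmu (ha k)) h2
  -- s * D' = mu * d * e   (pure algebra from S2)
  have hsD' : ∀ k : ZMod N,
      (xt (k + 1) - xth k) *
        (lam * (xh (k + 1) - x (k + 1)) - mu * (xt (k + 1) - x (k + 1))) =
      mu * (xt (k + 1) - x (k + 1)) * (xh (k + 1) - xt (k + 1)) := fun k => by
    linear_combination -hS2 k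
  -- c * D' = lam * r * e
  have hcD' : ∀ k : ZMod N,
      (xh (k + 1) - xth k) *
        (lam * (xh (k + 1) - x (k + 1)) - mu * (xt (k + 1) - x (k + 1))) =
      lam * (xh (k + 1) - x (k + 1)) * (xh (k + 1) - xt (k + 1)) := fun k => by
    linear_combination -hS2 k
  -- D' ≠ 0
  have hD' : ∀ k : ZMod N,
      lam * (xh (k + 1) - x (k + 1)) - mu * (xt (k + 1) - x (k + 1)) ≠ 0 := by
    intro k h
    have h2 := hsD' k
    rw [h, mul_zero] at h2
    exact mul_ne_zero (mul_ne_zero hmu (hd (k + 1))) (he (k + 1)) h2.symm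
  -- r ≠ 0
  have hr1 : ∀ k : ZMod N, xh (k + 1) - x (k + 1) ≠ 0 := by
    intro k h
    have h2 := hcD' k
    rw [h, mul_zero, zero_mul, zero_sub] at h2
    have hc : xh (k + 1) - xth k = 0 := by
      rcases mul_eq_zero.1 h2 with h3 | h3
      · exact h3
      · exact absurd h3 (neg_ne_zero.2 (mul_ne_zero hmu (hd (k + 1))))
    apply hxth k
    have hx : x (k + 1) - xth k = (x (k + 1) - xh (k + 1)) + (xh (k + 1) - xth k) := by ring
    rw [hx, hc]
    linarith [h]
  have hr : ∀ k : ZMod N, xh k - x k ≠ 0 := by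
    intro k
    have := hr1 (k - 1)
    simpa [sub_add_cancel] using this
  -- cleared corner equation:  a*q*D' = d*r*D (at shifted indices)
  have hEp : ∀ k : ZMod N,
      (x (k + 1) - xt k) * (x (k + 1) - xh k) *
        (lam * (xh (k + 1) - x (k + 1)) - mu * (xt (k + 1) - x (k + 1))) =
      (xt (k + 1) - x (k + 1)) * (xh (k + 1) - x (k + 1)) *
        (mu * (x (k + 1) - xt k) - lam * (x (k + 1) - xh k)) := by
    intro k
    have h := hE (k + 1)
    rw [add_sub_cancel_right] at h
    have hda : xt (k + 1) - x (k + 1) ≠ 0 := hd (k + 1)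
    have hra : xh (k + 1) - x (k + 1) ≠ 0 := hr1 k
    have hak := ha k
    have hqk := hq k
    field_simp [hda, hra, hak, hqk] at h
    linear_combination h
  -- take products of the per-site identities
  have H1 : (∏ k : ZMod N, ((xth k - xh k) *
        (mu * (x (k + 1) - xt k) - lam * (x (k + 1) - xh k)))) =
      ∏ k : ZMod N, (lam * (x (k + 1) - xh k) * (xh k - xt k)) :=
    Finset.prod_congr rfl fun k _ => hbD k
  have H2 : (∏ k : ZMod N, ((xh (k + 1) - xth k) *
        (lam * (xh (k + 1) - x (k + 1)) - mu * (xt (k + 1) - x (k + 1))))) =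
      ∏ k : ZMod N, (lam * (xh (k + 1) - x (k + 1)) * (xh (k + 1) - xt (k + 1))) :=
    Finset.prod_congr rfl fun k _ => hcD' k
  have H3 : (∏ k : ZMod N, ((x (k + 1) - xt k) * (x (k + 1) - xh k) *
        (lam * (xh (k + 1) - x (k + 1)) - mu * (xt (k + 1) - x (k + 1))))) =
      ∏ k : ZMod N, ((xt (k + 1) - x (k + 1)) * (xh (k + 1) - x (k + 1)) *
        (mu * (x (k + 1) - xt k) - lam * (x (k + 1) - xh k))) :=
    Finset.prod_congr rfl fun k _ => hEp k
  -- shift lemmas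
  have Sh1 : (∏ k : ZMod N, (xh (k + 1) - x (k + 1))) = ∏ k : ZMod N, (xh k - x k) :=
    Fintype.prod_equiv (Equiv.addRight (1 : ZMod N)) _ _ fun k => rfl
  have Sh2 : (∏ k : ZMod N, (xt (k + 1) - x (k + 1))) = ∏ k : ZMod N, (xt k - x k) :=
    Fintype.prod_equiv (Equiv.addRight (1 : ZMod N)) _ _ fun k => rfl
  have Sh3 : (∏ k : ZMod N, (xh (k + 1) - xt (k + 1))) = ∏ k : ZMod N, (xh k - xt k) :=
    Fintype.prod_equiv (Equiv.addRight (1 : ZMod N)) _ _ fun k => rfl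
  rw [Finset.prod_mul_distrib, Finset.prod_mul_distrib, Finset.prod_mul_distrib] at H1
  rw [Finset.prod_mul_distrib, Finset.prod_mul_distrib, Finset.prod_mul_distrib, Sh1, Sh3] at H2
  rw [Finset.prod_mul_distrib, Finset.prod_mul_distrib, Finset.prod_mul_distrib,
    Finset.prod_mul_distrib, Sh1, Sh2] at H3
  -- abbreviations for the global products
  set A := ∏ k : ZMod N, (x (k + 1) - xt k) with hA
  set B := ∏ k : ZMod N, (xth k - xh k) with hB
  set C := ∏ k : ZMod N, (xh (k + 1) - xth k) with hC
  set Dd := ∏ k : ZMod N, (xt k - x k) with hDd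
  set Q := ∏ k : ZMod N, (x (k + 1) - xh k) with hQ
  set E := ∏ k : ZMod N, (xh k - xt k) with hE2
  set R := ∏ k : ZMod N, (xh k - x k) with hR
  set L := ∏ k : ZMod N, lam with hL
  set PD := ∏ k : ZMod N, (mu * (x (k + 1) - xt k) - lam * (x (k + 1) - xh k)) with hPD
  set PD' := ∏ k : ZMod N,
      (lam * (xh (k + 1) - x (k + 1)) - mu * (xt (k + 1) - x (k + 1))) with hPD'
  have hPDne : PD ≠ 0 := Finset.prod_ne_zero_iff.2 fun k _ => hD k
  have hPD'ne : PD' ≠ 0 := Finset.prod_ne_zero_iff.2 fun k _ => hD' k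
  have hQne : Q ≠ 0 := Finset.prod_ne_zero_iff.2 fun k _ => hq k
  -- H1 : B * PD = L * Q * E ; H2 : C * PD' = L * R * E ; H3 : A * Q * PD' = Dd * R * PD
  have key : A * B * (PD * PD' * Q) = C * Dd * (PD * PD' * Q) := by
    linear_combination (A * PD' * Q) * H1 + (L * Q * E) * H3 - (Dd * PD * Q) * H2
  exact mul_right_cancel₀ (mul_ne_zero (mul_ne_zero hPDne hPD'ne) hQne) key
end

section
/- Suppose λ ≠ 0, μ ≠ 0, λ ≠ μ, the corner equation (E) and the superposition formulas (S1), (S2) hold for all k ∈ ℤ/Nℤ, and assume the nondegeneracy conditions: for all k, each of the quantities x̃_k−x_k±λ, x_k−x̃_{k−1}±λ, x̂_k−x_k±μ, x_k−x̂_{k−1}±μ, x_{k+1}−x̃_k±λ, x_{k+1}−x̂_k±μ, x̂̃_k−x̃_k±μ, x̂̃_k−x̂_k±λ, x̃_k−x̂̃_{k−1}±μ, x̂_k−x̂̃_{k−1}±λ, x̂_{k+1}−x̂̃_k±λ, x̃_{k+1}−x̂̃_k±μ, x̂_k−x̃_k±(λ−μ) and x̂̃_k−x_{k+1}±(λ−μ)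 is nonzero (for both choices of sign). Then the corner equations (E1), (E2) and (E12) hold for all k ∈ ℤ/Nℤ. -/
/-- For the symmetric rational multiplicative Toda-type system
with periodic boundary conditions, corner equation (E) and superposition
formulas (S1), (S2) (plus nondegeneracy, for both signs) imply (E1), (E2),
(E12). -/
theorem ratMultToda_superposition
    (N : ℕ) [NeZero N] (x xt xh xth : ZMod N → ℝ) (lam mu : ℝ)
    (hlam : lam ≠ 0) (hmu : mu ≠ 0) (hlm : lam ≠ mu)
    (hE : ∀ k : ZMod N,
      ((xt k - x k + lam) / (xt k - x k - lam)) *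
        ((x k - xt (k - 1) + lam) / (x k - xt (k - 1) - lam)) =
      ((xh k - x k + mu) / (xh k - x k - mu)) *
        ((x k - xh (k - 1) + mu) / (x k - xh (k - 1) - mu)))
    (hS1 : ∀ k : ZMod N,
      mu * (xth k - xh k) * (x (k + 1) - xt k)
        - lam * (xth k - xt k) * (x (k + 1) - xh k) + lam * mu * (lam - mu) = 0)
    (hS2 : ∀ k : ZMod N,
      mu * (xt (k + 1) - x (k + 1)) * (xh (k + 1) - xth k)
        - lam * (xh (k + 1) - x (k + 1)) * (xt (k + 1) - xth k)
        + lam * mu * (lam - mu) = 0)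
    (hnd : ∀ k : ZMod N, ∀ s : ℝ, s = 1 ∨ s = -1 →
      xt k - x k + s * lam ≠ 0 ∧ x k - xt (k - 1) + s * lam ≠ 0 ∧
      xh k - x k + s * mu ≠ 0 ∧ x k - xh (k - 1) + s * mu ≠ 0 ∧
      x (k + 1) - xt k + s * lam ≠ 0 ∧ x (k + 1) - xh k + s * mu ≠ 0 ∧
      xth k - xt k + s * mu ≠ 0 ∧ xth k - xh k + s * lam ≠ 0 ∧
      xt k - xth (k - 1) + s * mu ≠ 0 ∧ xh k - xth (k - 1) + s * lam ≠ 0 ∧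
      xh (k + 1) - xth k + s * lam ≠ 0 ∧ xt (k + 1) - xth k + s * mu ≠ 0 ∧
      xh k - xt k + s * (lam - mu) ≠ 0 ∧ xth k - x (k + 1) + s * (lam - mu) ≠ 0) :
    (∀ k : ZMod N,
      ((xt k - x k + lam) / (xt k - x k - lam)) *
        ((x (k + 1) - xt k + lam) / (x (k + 1) - xt k - lam)) =
      ((xth k - xt k + mu) / (xth k - xt k - mu)) *
        ((xt k - xth (k - 1) + mu) / (xt k - xth (k - 1) - mu))) ∧
    (∀ k : ZMod N,
      ((xh k - x k + mu) / (xh k - x k - mu)) *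
        ((x (k + 1) - xh k + mu) / (x (k + 1) - xh k - mu)) =
      ((xth k - xh k + lam) / (xth k - xh k - lam)) *
        ((xh k - xth (k - 1) + lam) / (xh k - xth (k - 1) - lam))) ∧
    (∀ k : ZMod N,
      ((xth k - xh k + lam) / (xth k - xh k - lam)) *
        ((xh (k + 1) - xth k + lam) / (xh (k + 1) - xth k - lam)) =
      ((xth k - xt k + mu) / (xth k - xt k - mu)) *
        ((xt (k + 1) - xth k + mu) / (xt (k + 1) - xth k - mu))) := by
  refine ⟨fun k => ?_, fun k => ?_, fun k => ?_⟩
  have hQ := hS2 (k - 1)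
  have hk : k - 1 + 1 = k := by ring
  rw [hk] at hQ
  obtain ⟨n1, n2, n3, n4, n5, n6, n7, n8, n9, n10, n11, n12, n13, n14⟩ := hnd k 1 (Or.inl rfl)
  obtain ⟨w1, w2, w3, w4, w5, w6, w7, w8, w9, w10, w11, w12, w13, w14⟩ := hnd k (-1) (Or.inr rfl)
  have d1 : xt k - x k - lam ≠ 0 := by intro hh; exact w1 (by linear_combination hh)
  have d2 : x (k + 1) - xt k - lam ≠ 0 := by intro hh; exact w5 (by linear_combination hh)
  have d3 : xth k - xt k - mu ≠ 0 := by intro hh; exact w7 (by linear_combination hh)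
  have d4 : xt k - xth (k - 1) - mu ≠ 0 := by intro hh; exact w9 (by linear_combination hh)
  have hA : 1*(xh k)*(lam) + (-1)*(xt k)*(mu) + 1*(x (k+1))*(mu) + (-1)*(x (k+1))*(lam) ≠ 0 := by
    intro h0
    have key : (xh k - xt k + 1 * (lam - mu)) * ((xh k - xt k + (-1) * (lam - mu)) * (lam * mu)) = 0 := by
      linear_combination (mu - lam) * hS1 k - (1*(xth k)*(mu) + (-1)*(xth k)*(lam) + (-1)*(xh k)*(mu) + 1*(xt k)*(lam)) * h0
    rcases mul_eq_zero.1 key with hc | hc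
    · exact n13 hc
    rcases mul_eq_zero.1 hc with hc | hc
    · exact w13 hc
    rcases mul_eq_zero.1 hc with hc | hc
    exacts [hlam hc, hmu hc]
  have hA2 : 1*(xh k)*(lam) + (-1)*(xt k)*(mu) + 1*(x k)*(mu) + (-1)*(x k)*(lam) ≠ 0 := by
    intro h0
    have key : (xh k - xt k + 1 * (lam - mu)) * ((xh k - xt k + (-1) * (lam - mu)) * (lam * mu)) = 0 := by
      linear_combination (mu - lam) * hQ - (1*(xth (k-1))*(mu) + (-1)*(xth (k-1))*(lam) + (-1)*(xh k)*(mu) + 1*(xt k)*(lam)) * h0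
    rcases mul_eq_zero.1 key with hc | hc
    · exact n13 hc
    rcases mul_eq_zero.1 hc with hc | hc
    · exact w13 hc
    rcases mul_eq_zero.1 hc with hc | hc
    exacts [hlam hc, hmu hc]
  rw [div_mul_div_comm, div_mul_div_comm, div_eq_div_iff (mul_ne_zero d1 d2) (mul_ne_zero d3 d4)]
  apply mul_left_cancel₀ (mul_ne_zero hA hA2)
  linear_combination ((-2)*(xh k)*(lam)*(lam)*(lam)*(mu) + 2*(xt k)*(lam)*(lam)*(mu)*(mu) + 2*(xt k)*(xt k)*(xh k)*(lam)*(mu) + (-2)*(xt k)*(xt k)*(xt k)*(mu)*(mu) + (-2)*(x (k+1))*(xh k)*(xth (k-1))*(lam)*(lam) + 2*(x (k+1))*(xt k)*(xth (k-1))*(lam)*(mu) + (-2)*(x (k+1))*(xt k)*(xh k)*(lam)*(mu) + 2*(x (k+1))*(xt k)*(xh k)*(lam)*(lam) + 2*(x (k+1))*(xt k)*(xt k)*(mu)*(mu) + (-2)*(x (k+1))*(xt k)*(xt k)*(lam)*(mu) + (-2)*(x k)*(lam)*(lam)*(mu)*(mu) + 2*(x k)*(lam)*(lam)*(lam)*(mu)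 + 2*(x k)*(xh k)*(xth (k-1))*(lam)*(lam) + (-2)*(x k)*(xt k)*(xth (k-1))*(lam)*(mu) + (-2)*(x k)*(xt k)*(xh k)*(lam)*(mu) + (-2)*(x k)*(xt k)*(xh k)*(lam)*(lam) + 4*(x k)*(xt k)*(xt k)*(mu)*(mu) + (-2)*(x k)*(x (k+1))*(xth (k-1))*(lam)*(mu) + 2*(x k)*(x (k+1))*(xth (k-1))*(lam)*(lam) + 2*(x k)*(x (k+1))*(xh k)*(lam)*(mu) + (-4)*(x k)*(x (k+1))*(xt k)*(mu)*(mu) + 4*(x k)*(x (k+1))*(xt k)*(lam)*(mu) + (-2)*(x k)*(x (k+1))*(xt k)*(lam)*(lam) + 2*(x k)*(x k)*(xth (k-1))*(lam)*(mu) + (-2)*(x k)*(x k)*(xth (k-1))*(lam)*(lam) + (-2)*(x k)*(x k)*(xt k)*(mu)*(mu) + 2*(x k)*(x k)*(xt k)*(lam)*(lam) + 2*(x k)*(x k)*(x (k+1))*(mu)*(mu) + (-2)*(x k)*(x k)*(x (k+1))*(lam)*(mu)) * hS1 k + (2*(xh k)*(lam)*(lam)*(lam)*(mu) + (-2)*(xt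 k)*(lam)*(lam)*(mu)*(mu) + (-2)*(xt k)*(xt k)*(xh k)*(lam)*(mu) + 2*(xt k)*(xt k)*(xt k)*(mu)*(mu) + 4*(x (k+1))*(xt k)*(xh k)*(lam)*(mu) + (-4)*(x (k+1))*(xt k)*(xt k)*(mu)*(mu) + (-2)*(x (k+1))*(x (k+1))*(xh k)*(lam)*(mu) + 2*(x (k+1))*(x (k+1))*(xt k)*(mu)*(mu) + 2*(x k)*(lam)*(lam)*(mu)*(mu) + (-2)*(x k)*(lam)*(lam)*(lam)*(mu) + (-2)*(x k)*(xt k)*(xt k)*(mu)*(mu) + 2*(x k)*(xt k)*(xt k)*(lam)*(mu) + 4*(x k)*(x (k+1))*(xt k)*(mu)*(mu) + (-4)*(x k)*(x (k+1))*(xt k)*(lam)*(mu) + (-2)*(x k)*(x (k+1))*(x (k+1))*(mu)*(mu) + 2*(x k)*(x (k+1))*(x (k+1))*(lam)*(mu)) * hQ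
  have hQ := hS2 (k - 1)
  have hk : k - 1 + 1 = k := by ring
  rw [hk] at hQ
  obtain ⟨n1, n2, n3, n4, n5, n6, n7, n8, n9, n10, n11, n12, n13, n14⟩ := hnd k 1 (Or.inl rfl)
  obtain ⟨w1, w2, w3, w4, w5, w6, w7, w8, w9, w10, w11, w12, w13, w14⟩ := hnd k (-1) (Or.inr rfl)
  have d1 : xh k - x k - mu ≠ 0 := by intro hh; exact w3 (by linear_combination hh)
  have d2 : x (k + 1) - xh k - mu ≠ 0 := by intro hh; exact w6 (by linear_combination hh)
  have d3 : xth k - xh k - lam ≠ 0 := by intro hh; exact w8 (by linear_combination hh)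
  have d4 : xh k - xth (k - 1) - lam ≠ 0 := by intro hh; exact w10 (by linear_combination hh)
  have hA : 1*(xh k)*(lam) + (-1)*(xt k)*(mu) + 1*(x (k+1))*(mu) + (-1)*(x (k+1))*(lam) ≠ 0 := by
    intro h0
    have key : (xh k - xt k + 1 * (lam - mu)) * ((xh k - xt k + (-1) * (lam - mu)) * (lam * mu)) = 0 := by
      linear_combination (mu - lam) * hS1 k - (1*(xth k)*(mu) + (-1)*(xth k)*(lam) + (-1)*(xh k)*(mu) + 1*(xt k)*(lam)) * h0
    rcases mul_eq_zero.1 key with hc | hc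
    · exact n13 hc
    rcases mul_eq_zero.1 hc with hc | hc
    · exact w13 hc
    rcases mul_eq_zero.1 hc with hc | hc
    exacts [hlam hc, hmu hc]
  have hA2 : 1*(xh k)*(lam) + (-1)*(xt k)*(mu) + 1*(x k)*(mu) + (-1)*(x k)*(lam) ≠ 0 := by
    intro h0
    have key : (xh k - xt k + 1 * (lam - mu)) * ((xh k - xt k + (-1) * (lam - mu)) * (lam * mu)) = 0 := by
      linear_combination (mu - lam) * hQ - (1*(xth (k-1))*(mu) + (-1)*(xth (k-1))*(lam) + (-1)*(xh k)*(mu) + 1*(xt k)*(lam)) * h0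
    rcases mul_eq_zero.1 key with hc | hc
    · exact n13 hc
    rcases mul_eq_zero.1 hc with hc | hc
    · exact w13 hc
    rcases mul_eq_zero.1 hc with hc | hc
    exacts [hlam hc, hmu hc]
  rw [div_mul_div_comm, div_mul_div_comm, div_eq_div_iff (mul_ne_zero d1 d2) (mul_ne_zero d3 d4)]
  apply mul_left_cancel₀ (mul_ne_zero hA hA2)
  linear_combination ((-2)*(xh k)*(lam)*(lam)*(mu)*(mu) + 2*(xh k)*(xh k)*(xh k)*(lam)*(lam) + 2*(xt k)*(lam)*(mu)*(mu)*(mu) + (-2)*(xt k)*(xh k)*(xh k)*(lam)*(mu) + (-2)*(x (k+1))*(xh k)*(xth (k-1))*(lam)*(mu) + 2*(x (k+1))*(xh k)*(xh k)*(lam)*(mu) + (-2)*(x (k+1))*(xh k)*(xh k)*(lam)*(lam) + 2*(x (k+1))*(xt k)*(xth (k-1))*(mu)*(mu) + (-2)*(x (k+1))*(xt k)*(xh k)*(mu)*(mu) + 2*(x (k+1))*(xt k)*(xh k)*(lam)*(mu) + (-2)*(x k)*(lam)*(mu)*(mu)*(mu) + 2*(x k)*(lam)*(lam)*(mu)*(mu)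 + 2*(x k)*(xh k)*(xth (k-1))*(lam)*(mu) + (-4)*(x k)*(xh k)*(xh k)*(lam)*(lam) + (-2)*(x k)*(xt k)*(xth (k-1))*(mu)*(mu) + 2*(x k)*(xt k)*(xh k)*(mu)*(mu) + 2*(x k)*(xt k)*(xh k)*(lam)*(mu) + (-2)*(x k)*(x (k+1))*(xth (k-1))*(mu)*(mu) + 2*(x k)*(x (k+1))*(xth (k-1))*(lam)*(mu) + 2*(x k)*(x (k+1))*(xh k)*(mu)*(mu) + (-4)*(x k)*(x (k+1))*(xh k)*(lam)*(mu) + 4*(x k)*(x (k+1))*(xh k)*(lam)*(lam) + (-2)*(x k)*(x (k+1))*(xt k)*(lam)*(mu) + 2*(x k)*(x k)*(xth (k-1))*(mu)*(mu) + (-2)*(x k)*(x k)*(xth (k-1))*(lam)*(mu) + (-2)*(x k)*(x k)*(xh k)*(mu)*(mu) + 2*(x k)*(x k)*(xh k)*(lam)*(lam) + 2*(x k)*(x k)*(x (k+1))*(lam)*(mu) + (-2)*(x k)*(x k)*(x (k+1))*(lam)*(lam)) * hS1 k + (2*(xh k)*(lam)*(lam)*(mu)*(mu) + (-2)*(xh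 k)*(xh k)*(xh k)*(lam)*(lam) + (-2)*(xt k)*(lam)*(mu)*(mu)*(mu) + 2*(xt k)*(xh k)*(xh k)*(lam)*(mu) + 4*(x (k+1))*(xh k)*(xh k)*(lam)*(lam) + (-4)*(x (k+1))*(xt k)*(xh k)*(lam)*(mu) + (-2)*(x (k+1))*(x (k+1))*(xh k)*(lam)*(lam) + 2*(x (k+1))*(x (k+1))*(xt k)*(lam)*(mu) + 2*(x k)*(lam)*(mu)*(mu)*(mu) + (-2)*(x k)*(lam)*(lam)*(mu)*(mu) + (-2)*(x k)*(xh k)*(xh k)*(lam)*(mu) + 2*(x k)*(xh k)*(xh k)*(lam)*(lam) + 4*(x k)*(x (k+1))*(xh k)*(lam)*(mu) + (-4)*(x k)*(x (k+1))*(xh k)*(lam)*(lam) + (-2)*(x k)*(x (k+1))*(x (k+1))*(lam)*(mu) + 2*(x k)*(x (k+1))*(x (k+1))*(lam)*(lam)) * hQ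
  obtain ⟨n1, n2, n3, n4, n5, n6, n7, n8, n9, n10, n11, n12, n13, n14⟩ := hnd k 1 (Or.inl rfl)
  obtain ⟨w1, w2, w3, w4, w5, w6, w7, w8, w9, w10, w11, w12, w13, w14⟩ := hnd k (-1) (Or.inr rfl)
  have d1 : xth k - xh k - lam ≠ 0 := by intro hh; exact w8 (by linear_combination hh)
  have d2 : xh (k + 1) - xth k - lam ≠ 0 := by intro hh; exact w11 (by linear_combination hh)
  have d3 : xth k - xt k - mu ≠ 0 := by intro hh; exact w7 (by linear_combination hh)
  have d4 : xt (k + 1) - xth k - mu ≠ 0 := by intro hh; exact w12 (by linear_combination hh)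
  rw [div_mul_div_comm, div_mul_div_comm, div_eq_div_iff (mul_ne_zero d1 d2) (mul_ne_zero d3 d4)]
  apply mul_left_cancel₀ (sub_ne_zero.2 hlm)
  linear_combination (2*(1*(xth k)*(mu) + (-1)*(xth k)*(lam) + (-1)*(xh k)*(mu) + 1*(xt k)*(lam))) * hS2 k - (2*((-1)*(xh (k+1))*(mu) + 1*(xt (k+1))*(lam) + 1*(xth k)*(mu) + (-1)*(xth k)*(lam))) * hS1 k
end

section
/- Suppose λ ≠ 0, μ ≠ 0, λ ≠ μ, the corner equation (E) and the superposition formulas (S1), (S2) hold for all k ∈ ℤ/Nℤ, and assume that for all k: x̃_k−x_k−λ ≠ 0, x̂̃_k−x̂_k−λ ≠ 0, x̃_k−x̂_k−λ+μ ≠ 0 and x_{k+1}−x̂̃_k+λ−μ ≠ 0. Then ∏_{k∈ℤ/Nℤ}(x_{k+1}−x̃_k+λ) · ∏_{k∈ℤ/Nℤ}(x̂̃_k−x̂_k−λ) = ∏_{k∈ℤ/Nℤ}(x̂_{k+1}−x̂̃_k+λ) · ∏_{k∈ℤ/Nℤ}(x̃_k−x_k−λ). -/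
/-- Spectrality (closure) product identity for the symmetric
rational multiplicative Toda-type system with periodic boundary conditions. -/
theorem ratMultToda_spectrality
    (N : ℕ) [NeZero N] (x xt xh xth : ZMod N → ℝ) (lam mu : ℝ)
    (hlam : lam ≠ 0) (hmu : mu ≠ 0) (hlm : lam ≠ mu)
    (hE : ∀ k : ZMod N,
      ((xt k - x k + lam) / (xt k - x k - lam)) *
        ((x k - xt (k - 1) + lam) / (x k - xt (k - 1) - lam)) =
      ((xh k - x k + mu) / (xh k - x k - mu)) *
        ((x k - xh (k - 1) + mu) / (x k - xh (k - 1) - mu)))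
    (hS1 : ∀ k : ZMod N,
      mu * (xth k - xh k) * (x (k + 1) - xt k)
        - lam * (xth k - xt k) * (x (k + 1) - xh k) + lam * mu * (lam - mu) = 0)
    (hS2 : ∀ k : ZMod N,
      mu * (xt (k + 1) - x (k + 1)) * (xh (k + 1) - xth k)
        - lam * (xh (k + 1) - x (k + 1)) * (xt (k + 1) - xth k)
        + lam * mu * (lam - mu) = 0)
    (hnd : ∀ k : ZMod N,
      xt k - x k - lam ≠ 0 ∧ xth k - xh k - lam ≠ 0 ∧
      xt k - xh k - lam + mu ≠ 0 ∧ x (k + 1) - xth k + lam - mu ≠ 0) :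
    (∏ k : ZMod N, (x (k + 1) - xt k + lam)) * (∏ k : ZMod N, (xth k - xh k - lam)) =
    (∏ k : ZMod N, (xh (k + 1) - xth k + lam)) * (∏ k : ZMod N, (xt k - x k - lam)) := by

  have hNcard : Fintype.card (ZMod N) = N := ZMod.card N
  have hc : (lam - mu) ^ N ≠ 0 := pow_ne_zero _ (sub_ne_zero.mpr hlm)
  apply mul_left_cancel₀ hc
  have h1 : ∀ k : ZMod N,
      (lam - mu) * ((x (k + 1) - xt k + lam) * (xth k - xh k - lam)) =
      lam * ((x (k + 1) - xth k + lam - mu) * (xt k - xh k - lam + mu)) := by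
    intro k
    linear_combination (-1 : ℝ) * hS1 k
  have h2 : ∀ k : ZMod N,
      (lam - mu) * ((xh (k + 1) - xth k + lam) * (xt (k + 1) - x (k + 1) - lam)) =
      lam * ((xt (k + 1) - xh (k + 1) - lam + mu) * (x (k + 1) - xth k + lam - mu)) := by
    intro k
    linear_combination (-1 : ℝ) * hS2 k
  have shift1 : (∏ k : ZMod N, (xt (k + 1) - x (k + 1) - lam)) =
      ∏ k : ZMod N, (xt k - x k - lam) :=
    Fintype.prod_equiv (Equiv.addRight (1 : ZMod N))
      (fun k => xt (k + 1) - x (k + 1) - lam) (fun k => xt k - x k - lam) (fun k => rfl)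
  have shift2 : (∏ k : ZMod N, (xt (k + 1) - xh (k + 1) - lam + mu)) =
      ∏ k : ZMod N, (xt k - xh k - lam + mu) :=
    Fintype.prod_equiv (Equiv.addRight (1 : ZMod N))
      (fun k => xt (k + 1) - xh (k + 1) - lam + mu)
      (fun k => xt k - xh k - lam + mu) (fun k => rfl)
  calc (lam - mu) ^ N *
        ((∏ k : ZMod N, (x (k + 1) - xt k + lam)) * ∏ k : ZMod N, (xth k - xh k - lam))
      = ∏ k : ZMod N,
          ((lam - mu) * ((x (k + 1) - xt k + lam) * (xth k - xh k - lam))) := by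
        rw [Finset.prod_mul_distrib, Finset.prod_mul_distrib, Finset.prod_const,
          Finset.card_univ, hNcard]
    _ = ∏ k : ZMod N,
          (lam * ((x (k + 1) - xth k + lam - mu) * (xt k - xh k - lam + mu))) := by
        exact Finset.prod_congr rfl fun k _ => h1 k
    _ = ∏ k : ZMod N,
          (lam * ((xt (k + 1) - xh (k + 1) - lam + mu) * (x (k + 1) - xth k + lam - mu))) := by
        simp only [Finset.prod_mul_distrib]
        rw [shift2]; ring
    _ = ∏ k : ZMod N,
          ((lam - mu) * ((xh (k + 1) - xth k + lam) * (xt (k + 1) - x (k + 1) - lam))) := by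
        exact Finset.prod_congr rfl fun k _ => (h2 k).symm
    _ = (lam - mu) ^ N *
        ((∏ k : ZMod N, (xh (k + 1) - xth k + lam)) * ∏ k : ZMod N, (xt k - x k - lam)) := by
        rw [Finset.prod_mul_distrib, Finset.prod_mul_distrib, Finset.prod_const,
          Finset.card_univ, hNcard, shift1]
end

section
/- Suppose λ, μ ∈ ℝ with e^{4λ} ≠ e^{4μ} and e^{4λ} ≠ 1, the corner equation (E) and the superposition formulas (S1), (S2) hold for all k ∈ ℤ/Nℤ, and assume that for all k: sinh(x̃_k−x_k−λ) ≠ 0, sinh(x̂̃_k−x̂_k−λ) ≠ 0, sinh(x̃_k−x̂_k−λ+μ) ≠ 0 and sinh(x_{k+1}−x̂̃_k+λ−μ) ≠ 0. Then ∏_{k∈ℤ/Nℤ} sinh(x_{k+1}−x̃_k+λ) · ∏_{k∈ℤ/Nℤ} sinh(x̂̃_k−x̂_k−λ) = ∏_{k∈ℤ/Nℤ} sinh(x̂_{k+1}−x̂̃_k+λ) · ∏_{k∈ℤ/Nℤ} sinh(x̃_k−x_k−λ). -/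
/-- Spectrality (closure) product identity for the symmetric
hyperbolic multiplicative Toda-type system with periodic boundary conditions. -/
theorem hypMultToda_spectrality
    (N : ℕ) [NeZero N] (x xt xh xth : ZMod N → ℝ) (lam mu : ℝ)
    (hlm : Real.exp (4 * lam) ≠ Real.exp (4 * mu))
    (hlam : Real.exp (4 * lam) ≠ 1)
    (hE : ∀ k : ZMod N,
      (Real.sinh (xt k - x k + lam) / Real.sinh (xt k - x k - lam)) *
        (Real.sinh (x k - xt (k - 1) + lam) / Real.sinh (x k - xt (k - 1) - lam)) =
      (Real.sinh (xh k - x k + mu) / Real.sinh (xh k - x k - mu)) *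
        (Real.sinh (x k - xh (k - 1) + mu) / Real.sinh (x k - xh (k - 1) - mu)))
    (hS1 : ∀ k : ZMod N,
      (Real.exp (4 * lam) - Real.exp (4 * mu)) *
          (Real.exp (2 * xh k) * Real.exp (2 * xt k)
            + Real.exp (2 * x (k + 1)) * Real.exp (2 * xth k))
        + Real.exp (2 * mu) * (1 - Real.exp (4 * lam)) *
          (Real.exp (2 * xh k) * Real.exp (2 * xth k)
            + Real.exp (2 * x (k + 1)) * Real.exp (2 * xt k))
        + Real.exp (2 * lam) * (Real.exp (4 * mu) - 1) *
          (Real.exp (2 * xt k) * Real.exp (2 * xth k)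
            + Real.exp (2 * x (k + 1)) * Real.exp (2 * xh k)) = 0)
    (hS2 : ∀ k : ZMod N,
      (Real.exp (4 * lam) - Real.exp (4 * mu)) *
          (Real.exp (2 * xh (k + 1)) * Real.exp (2 * xt (k + 1))
            + Real.exp (2 * x (k + 1)) * Real.exp (2 * xth k))
        + Real.exp (2 * mu) * (1 - Real.exp (4 * lam)) *
          (Real.exp (2 * xh (k + 1)) * Real.exp (2 * xth k)
            + Real.exp (2 * x (k + 1)) * Real.exp (2 * xt (k + 1)))
        + Real.exp (2 * lam) * (Real.exp (4 * mu) - 1) *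
          (Real.exp (2 * xt (k + 1)) * Real.exp (2 * xth k)
            + Real.exp (2 * x (k + 1)) * Real.exp (2 * xh (k + 1))) = 0)
    (hnd : ∀ k : ZMod N,
      Real.sinh (xt k - x k - lam) ≠ 0 ∧ Real.sinh (xth k - xh k - lam) ≠ 0 ∧
      Real.sinh (xt k - xh k - lam + mu) ≠ 0 ∧
      Real.sinh (x (k + 1) - xth k + lam - mu) ≠ 0) :
    (∏ k : ZMod N, Real.sinh (x (k + 1) - xt k + lam)) *
      (∏ k : ZMod N, Real.sinh (xth k - xh k - lam)) =
    (∏ k : ZMod N, Real.sinh (xh (k + 1) - xth k + lam)) *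
      (∏ k : ZMod N, Real.sinh (xt k - x k - lam)) := by
  have E : ∀ z w : ℝ, Real.sinh z * (2 * Real.exp w)
      = Real.exp (z + w) - Real.exp (w - z) := by
    intro z w
    have h1 : Real.exp z * Real.exp w = Real.exp (z + w) := (Real.exp_add z w).symm
    have h2 : Real.exp (-z) * Real.exp w = Real.exp (w - z) := by
      rw [← Real.exp_add]; ring_nf
    rw [Real.sinh_eq]
    linear_combination h1 - h2
  have h4l : Real.exp (4 * lam) = Real.exp (2 * lam) * Real.exp (2 * lam) := by
    rw [← Real.exp_add]; ring_nf
  have h4m : Real.exp (4 * mu) = Real.exp (2 * mu) * Real.exp (2 * mu) := by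
    rw [← Real.exp_add]; ring_nf
  have hLM : Real.exp (2 * lam) * Real.exp (2 * lam)
      - Real.exp (2 * mu) * Real.exp (2 * mu) ≠ 0 := by
    rw [← h4l, ← h4m]; exact sub_ne_zero.mpr hlm
  have key : ∀ k : ZMod N,
      Real.sinh (x (k + 1) - xt k + lam) * Real.sinh (xth k - xh k - lam) *
        Real.sinh (xt (k + 1) - xh (k + 1) - lam + mu)
      = Real.sinh (xh (k + 1) - xth k + lam) * Real.sinh (xt (k + 1) - x (k + 1) - lam) *
        Real.sinh (xt k - xh k - lam + mu) := by
    intro k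
    have hS1' := hS1 k
    have hS2' := hS2 k
    rw [h4l, h4m] at hS1' hS2'
    have e1 : Real.sinh (x (k + 1) - xt k + lam) *
        (2 * Real.exp (x (k + 1) + xt k + lam))
        = Real.exp (2 * x (k + 1)) * Real.exp (2 * lam) - Real.exp (2 * xt k) := by
      rw [E, show (x (k + 1) - xt k + lam) + (x (k + 1) + xt k + lam)
            = 2 * x (k + 1) + 2 * lam by ring,
          show (x (k + 1) + xt k + lam) - (x (k + 1) - xt k + lam) = 2 * xt k by ring,
          Real.exp_add]
    have e2 : Real.sinh (xth k - xh k - lam) *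
        (2 * Real.exp (xth k + xh k + lam))
        = Real.exp (2 * xth k) - Real.exp (2 * xh k) * Real.exp (2 * lam) := by
      rw [E, show (xth k - xh k - lam) + (xth k + xh k + lam) = 2 * xth k by ring,
          show (xth k + xh k + lam) - (xth k - xh k - lam) = 2 * xh k + 2 * lam by ring,
          Real.exp_add]
    have e3 : Real.sinh (xt (k + 1) - xh (k + 1) - lam + mu) *
        (2 * Real.exp (xt (k + 1) + xh (k + 1) + lam + mu))
        = Real.exp (2 * xt (k + 1)) * Real.exp (2 * mu)
          - Real.exp (2 * xh (k + 1)) * Real.exp (2 * lam) := by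
      rw [E, show (xt (k + 1) - xh (k + 1) - lam + mu) + (xt (k + 1) + xh (k + 1) + lam + mu)
            = 2 * xt (k + 1) + 2 * mu by ring,
          show (xt (k + 1) + xh (k + 1) + lam + mu) - (xt (k + 1) - xh (k + 1) - lam + mu)
            = 2 * xh (k + 1) + 2 * lam by ring,
          Real.exp_add, Real.exp_add]
    have e4 : Real.sinh (xh (k + 1) - xth k + lam) *
        (2 * Real.exp (xh (k + 1) + xth k + lam))
        = Real.exp (2 * xh (k + 1)) * Real.exp (2 * lam) - Real.exp (2 * xth k) := by
      rw [E, show (xh (k + 1) - xth k + lam) + (xh (k + 1) + xth k + lam)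
            = 2 * xh (k + 1) + 2 * lam by ring,
          show (xh (k + 1) + xth k + lam) - (xh (k + 1) - xth k + lam) = 2 * xth k by ring,
          Real.exp_add]
    have e5 : Real.sinh (xt (k + 1) - x (k + 1) - lam) *
        (2 * Real.exp (xt (k + 1) + x (k + 1) + lam))
        = Real.exp (2 * xt (k + 1)) - Real.exp (2 * x (k + 1)) * Real.exp (2 * lam) := by
      rw [E, show (xt (k + 1) - x (k + 1) - lam) + (xt (k + 1) + x (k + 1) + lam)
            = 2 * xt (k + 1) by ring,
          show (xt (k + 1) + x (k + 1) + lam) - (xt (k + 1) - x (k + 1) - lam)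
            = 2 * x (k + 1) + 2 * lam by ring,
          Real.exp_add]
    have e6 : Real.sinh (xt k - xh k - lam + mu) *
        (2 * Real.exp (xt k + xh k + lam + mu))
        = Real.exp (2 * xt k) * Real.exp (2 * mu)
          - Real.exp (2 * xh k) * Real.exp (2 * lam) := by
      rw [E, show (xt k - xh k - lam + mu) + (xt k + xh k + lam + mu)
            = 2 * xt k + 2 * mu by ring,
          show (xt k + xh k + lam + mu) - (xt k - xh k - lam + mu)
            = 2 * xh k + 2 * lam by ring,
          Real.exp_add, Real.exp_add]
    have hw : Real.exp (x (k + 1) + xt k + lam) * Real.exp (xth k + xh k + lam) *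
        Real.exp (xt (k + 1) + xh (k + 1) + lam + mu)
        = Real.exp (xh (k + 1) + xth k + lam) * Real.exp (xt (k + 1) + x (k + 1) + lam) *
          Real.exp (xt k + xh k + lam + mu) := by
      rw [← Real.exp_add, ← Real.exp_add, ← Real.exp_add, ← Real.exp_add]
      ring_nf
    have hmain : (Real.sinh (x (k + 1) - xt k + lam) *
          (2 * Real.exp (x (k + 1) + xt k + lam))) *
        (Real.sinh (xth k - xh k - lam) * (2 * Real.exp (xth k + xh k + lam))) *
        (Real.sinh (xt (k + 1) - xh (k + 1) - lam + mu) *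
          (2 * Real.exp (xt (k + 1) + xh (k + 1) + lam + mu)))
        = (Real.sinh (xh (k + 1) - xth k + lam) *
          (2 * Real.exp (xh (k + 1) + xth k + lam))) *
        (Real.sinh (xt (k + 1) - x (k + 1) - lam) *
          (2 * Real.exp (xt (k + 1) + x (k + 1) + lam))) *
        (Real.sinh (xt k - xh k - lam + mu) *
          (2 * Real.exp (xt k + xh k + lam + mu))) := by
      rw [e1, e2, e3, e4, e5, e6]
      apply mul_left_cancel₀ hLM
      linear_combination
        (Real.exp (2 * lam) * (Real.exp (2 * xt (k + 1)) * Real.exp (2 * mu)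
          - Real.exp (2 * xh (k + 1)) * Real.exp (2 * lam))) * hS1'
        - (Real.exp (2 * lam) * (Real.exp (2 * xt k) * Real.exp (2 * mu)
          - Real.exp (2 * xh k) * Real.exp (2 * lam))) * hS2'
    have h8 : (8 : ℝ) * (Real.exp (xh (k + 1) + xth k + lam) *
        Real.exp (xt (k + 1) + x (k + 1) + lam) * Real.exp (xt k + xh k + lam + mu)) ≠ 0 := by
      positivity
    apply mul_right_cancel₀ h8
    calc Real.sinh (x (k + 1) - xt k + lam) * Real.sinh (xth k - xh k - lam) *
          Real.sinh (xt (k + 1) - xh (k + 1) - lam + mu) *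
          ((8 : ℝ) * (Real.exp (xh (k + 1) + xth k + lam) *
            Real.exp (xt (k + 1) + x (k + 1) + lam) * Real.exp (xt k + xh k + lam + mu)))
        = Real.sinh (x (k + 1) - xt k + lam) * Real.sinh (xth k - xh k - lam) *
          Real.sinh (xt (k + 1) - xh (k + 1) - lam + mu) *
          ((8 : ℝ) * (Real.exp (x (k + 1) + xt k + lam) * Real.exp (xth k + xh k + lam) *
            Real.exp (xt (k + 1) + xh (k + 1) + lam + mu))) := by rw [hw]
      _ = _ := by linear_combination hmain
  have hprod : (∏ k : ZMod N, (Real.sinh (x (k + 1) - xt k + lam) *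
        Real.sinh (xth k - xh k - lam) * Real.sinh (xt (k + 1) - xh (k + 1) - lam + mu)))
      = ∏ k : ZMod N, (Real.sinh (xh (k + 1) - xth k + lam) *
        Real.sinh (xt (k + 1) - x (k + 1) - lam) * Real.sinh (xt k - xh k - lam + mu)) :=
    Finset.prod_congr rfl fun k _ => key k
  simp only [Finset.prod_mul_distrib] at hprod
  have hsh3 : (∏ k : ZMod N, Real.sinh (xt (k + 1) - xh (k + 1) - lam + mu))
      = ∏ k : ZMod N, Real.sinh (xt k - xh k - lam + mu) :=
    Fintype.prod_equiv (Equiv.addRight 1) _ _ fun k => rfl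
  have hsh5 : (∏ k : ZMod N, Real.sinh (xt (k + 1) - x (k + 1) - lam))
      = ∏ k : ZMod N, Real.sinh (xt k - x k - lam) :=
    Fintype.prod_equiv (Equiv.addRight 1) _ _ fun k => rfl
  rw [hsh3, hsh5] at hprod
  have hne : (∏ k : ZMod N, Real.sinh (xt k - xh k - lam + mu)) ≠ 0 :=
    Finset.prod_ne_zero_iff.mpr fun k _ => (hnd k).2.2.1
  apply mul_right_cancel₀ hne
  linear_combination hprod
end
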